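/- arXiv:1011.1760 — 5 statements merged into one kernel-verified Lean document; each statement's English description precedes it below -/
import Mathlib

section
/- The number of n×n Hankel matrices over F_q of rank at most r equals q^(2r), for any 0 ≤ r < n. -/
/-- A matrix is Hankel if `m i j = m r s` whenever `i + j = r + s`. -/
def IsHankel {F : Type*} {n : ℕ} (M : Matrix (Fin n) (Fin n) F) : Prop :=
  ∀ i j r s : Fin n, (i : ℕ) + (j : ℕ) = (r : ℕ) + (s : ℕ) → M i j = M r s

/-!
Let `φₐ : F[X] → F` be the linear functional with `φₐ (X ^ i) = a i`. A vector `v` lies in the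
kernel of the Hankel matrix of `a` iff `V = ∑ vⱼ Xʲ` satisfies `φₐ (X ^ i * V) = 0` for all
`i < n`, i.e. iff `V`, made monic, is the characteristic polynomial of a linear recurrence
satisfied by the first `n + deg V` terms of `a`. The Berlekamp–Massey theory of the linear
complexity profile `L k` of `a` (at every jump, `L k + L (k + 1) = k + 1`) shows that the kernel
consists exactly of the multiples of degree `< n` of one such recurrence: the shortest one for
`a₀, …, a_{2n-2}` if `L (2n - 1) ≤ n`, the one before the last jump otherwise. Hence the rank is
`min (L, 2n - L)` with `L = L (2n - 1)`.

By the same jump rule, of the `q` one-term extensions of a sequence of length `m` and complexity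
`L`, all keep complexity `L` if `2L > m`; otherwise exactly one does and the others jump to
`m + 1 - L`. So exactly `(q - 1) q^(2c - 1)` sequences of length `m ≥ 2c`, and
`(q - 1) q^(2(m - c))` of length `c ≤ m < 2c`, have complexity `c ≥ 1`; the count of
`min (L, 2n - L) ≤ r` then telescopes to `q^(2r)`.
-/

open Polynomial Finset Module Matrix

lemma Monotone.exists_crossing {α : Type*} [LinearOrder α] {f : ℕ → α} (hf : Monotone f)
    {s : α} {t m : ℕ} (ht : f t ≤ s) (hm : s < f m) :
    ∃ j, t ≤ j ∧ j < m ∧ f j ≤ s ∧ s < f (j + 1) := by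
  induction m with
  | zero => exact absurd ((hf (Nat.zero_le t)).trans ht) hm.not_ge
  | succ m ih =>
    by_cases hfm : f m ≤ s
    · refine ⟨m, ?_, m.lt_succ_self, hfm, hm⟩
      by_contra htm
      exact ((hf (show m + 1 ≤ t by omega)).trans ht).not_gt hm
    · obtain ⟨j, htj, hjm, hj⟩ := ih (not_le.mp hfm)
      exact ⟨j, htj, by omega, hj⟩

lemma card_filter_ite_eq {α : Type*} [Fintype α] [DecidableEq α] (x₀ : α) (u v c : ℕ) :
    #{x | (if x = x₀ then u else v) = c}
      = (if u = c then 1 else 0) + (if v = c then Fintype.card α - 1 else 0) := by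
  rw [card_filter, ← Finset.add_sum_erase _ _ (mem_univ x₀), if_pos rfl,
    Finset.sum_congr rfl fun x hx => by rw [if_neg (Finset.ne_of_mem_erase hx)],
    sum_const, card_erase_of_mem (mem_univ x₀), card_univ, smul_eq_mul]
  split_ifs <;> simp

lemma card_filter_snoc {α : Type*} [Fintype α] {m : ℕ} (p : (Fin (m + 1) → α) → Prop)
    [DecidablePred p] :
    #{a | p a} = ∑ b : Fin m → α, #{x | p (Fin.snoc b x)} := by
  simp only [card_filter]
  rw [← (Fin.snocEquiv fun _ => α).sum_comp, Fintype.sum_prod_type_right]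
  rfl

section Recurrences

variable {R : Type*} [CommRing R] {a : ℕ → R} {m : ℕ} {P Q : R[X]}

noncomputable def momentFunctional (a : ℕ → R) : R[X] →ₗ[R] R :=
  lsum fun i => LinearMap.smulRight LinearMap.id (a i)

@[simp]
lemma momentFunctional_monomial (a : ℕ → R) (i : ℕ) (c : R) :
    momentFunctional a (monomial i c) = c * a i := by
  simp [momentFunctional]

@[simp]
lemma momentFunctional_X_pow (a : ℕ → R) (i : ℕ) : momentFunctional a (X ^ i) = a i := by
  rw [← monomial_one_right_eq_X_pow, momentFunctional_monomial, one_mul]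

lemma momentFunctional_update (a : ℕ → R) (m : ℕ) (x : R) (p : R[X]) :
    momentFunctional (Function.update a m x) p
      = momentFunctional a p + p.coeff m * (x - a m) := by
  induction p using Polynomial.induction_on' with
  | add p q hp hq => simp only [map_add, hp, hq, coeff_add]; ring
  | monomial i c =>
    rcases eq_or_ne i m with rfl | h
    · simp; ring
    · simp [coeff_monomial, h]

lemma momentFunctional_X_pow_mul_mul_eq_sum (a : ℕ → R) (t : ℕ) {N : ℕ}
    (hN : P.natDegree < N) (Q : R[X]) :
    momentFunctional a (X ^ t * (P * Q))
      = ∑ j ∈ range N, P.coeff j * momentFunctional a (X ^ (t + j) * Q) := by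
  conv_lhs => rw [P.as_sum_range_C_mul_X_pow' hN]
  simp only [Finset.sum_mul, Finset.mul_sum, map_sum]
  refine Finset.sum_congr rfl fun j _ => ?_
  rw [show X ^ t * (C (P.coeff j) * X ^ j * Q) = C (P.coeff j) * (X ^ (t + j) * Q) by ring,
    C_mul', map_smul, smul_eq_mul]

lemma Polynomial.Monic.momentFunctional_X_pow_mul_mul {t : ℕ} (hP : P.Monic)
    (hQ : ∀ j < P.natDegree, momentFunctional a (X ^ (t + j) * Q) = 0) :
    momentFunctional a (X ^ t * (P * Q)) = momentFunctional a (X ^ (t + P.natDegree) * Q) := by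
  rw [momentFunctional_X_pow_mul_mul_eq_sum a t (Nat.lt_succ_self _), Finset.sum_range_succ,
    Finset.sum_eq_zero fun j hj => by rw [hQ j (Finset.mem_range.mp hj), mul_zero],
    hP.coeff_natDegree, zero_add, one_mul]

/-- For `P = X ^ d - ∑ i < d, cᵢ X ^ i`, the condition `φₐ (X ^ t * P) = 0` is the recurrence
`a (t + d) = ∑ i < d, cᵢ a (t + i)`; here it is required of the first `m` terms. -/
def IsRecurrence (a : ℕ → R) (m : ℕ) (P : R[X]) : Prop :=
  P.Monic ∧ ∀ t, t + P.natDegree < m → momentFunctional a (X ^ t * P) = 0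

lemma IsRecurrence.mono (h : IsRecurrence a m P) {m' : ℕ} (hm : m' ≤ m) :
    IsRecurrence a m' P :=
  ⟨h.1, fun t ht => h.2 t (by omega)⟩

lemma IsRecurrence.succ (h : IsRecurrence a m P)
    (hm : momentFunctional a (X ^ (m - P.natDegree) * P) = 0) : IsRecurrence a (m + 1) P := by
  refine ⟨h.1, fun t ht => ?_⟩
  rcases (by omega : t + P.natDegree < m ∨ t = m - P.natDegree) with ht | rfl
  · exact h.2 t ht
  · exact hm

lemma isRecurrence_update_iff {x : R} :
    IsRecurrence (Function.update a m x) m P ↔ IsRecurrence a m P := by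
  refine and_congr_right fun _ => forall_congr' fun t => imp_congr_right fun ht => ?_
  have hdeg : (X ^ t * P).natDegree < m :=
    (natDegree_mul_le.trans (Nat.add_le_add_right (natDegree_X_pow_le _) _)).trans_lt ht
  rw [momentFunctional_update, coeff_eq_zero_of_natDegree_lt hdeg, zero_mul, add_zero]

/-- Massey's lemma: both sides equal `φₐ (X ^ u * (P * Q))`, `u = m - deg P - deg Q`. -/
theorem IsRecurrence.momentFunctional_eq (hP : IsRecurrence a m P) (hQ : IsRecurrence a m Q)
    (h : P.natDegree + Q.natDegree ≤ m) :
    momentFunctional a (X ^ (m - P.natDegree) * P)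
      = momentFunctional a (X ^ (m - Q.natDegree) * Q) := by
  set u := m - P.natDegree - Q.natDegree
  have hPQ := hP.1.momentFunctional_X_pow_mul_mul (t := u) fun j _ => hQ.2 _ (by omega)
  have hQP := hQ.1.momentFunctional_X_pow_mul_mul (t := u) fun j _ => hP.2 _ (by omega)
  rw [show u + P.natDegree = m - Q.natDegree by omega] at hPQ
  rw [show u + Q.natDegree = m - P.natDegree by omega, mul_comm Q P] at hQP
  rw [← hQP, hPQ]

variable {k : ℕ}

noncomputable def linearComplexity (a : ℕ → R) (m : ℕ) : ℕ :=
  sInf {d | ∃ P, IsRecurrence a m P ∧ P.natDegree = d}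

lemma linearComplexity_le (h : IsRecurrence a m P) : linearComplexity a m ≤ P.natDegree :=
  Nat.sInf_le ⟨P, h, rfl⟩

@[simp]
lemma linearComplexity_update (a : ℕ → R) (m : ℕ) (x : R) :
    linearComplexity (Function.update a m x) m = linearComplexity a m := by
  simp only [linearComplexity, isRecurrence_update_iff]

lemma IsRecurrence.momentFunctional_ne_zero_of_lt (hP : IsRecurrence a k P)
    (hPd : P.natDegree = linearComplexity a k)
    (h : linearComplexity a k < linearComplexity a (k + 1)) :
    momentFunctional a (X ^ (k - P.natDegree) * P) ≠ 0 := fun h0 => by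
  have := linearComplexity_le (hP.succ h0)
  omega

variable [Nontrivial R]

lemma isRecurrence_X_pow (a : ℕ → R) (m : ℕ) : IsRecurrence a m (X ^ m) :=
  ⟨monic_X_pow m, fun t ht => by simp at ht⟩

lemma exists_isRecurrence_natDegree_eq (a : ℕ → R) (m : ℕ) :
    ∃ P, IsRecurrence a m P ∧ P.natDegree = linearComplexity a m :=
  Nat.sInf_mem (s := {d | ∃ P, IsRecurrence a m P ∧ P.natDegree = d})
    ⟨m, X ^ m, isRecurrence_X_pow a m, natDegree_X_pow m⟩

lemma linearComplexity_le_self (a : ℕ → R) (m : ℕ) : linearComplexity a m ≤ m :=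
  (linearComplexity_le (isRecurrence_X_pow a m)).trans (natDegree_X_pow m).le

lemma linearComplexity_mono (a : ℕ → R) : Monotone (linearComplexity a) := fun _ m' hm =>
  let ⟨_, hP, hdeg⟩ := exists_isRecurrence_natDegree_eq a m'
  hdeg ▸ linearComplexity_le (hP.mono hm)

@[simp]
lemma linearComplexity_zero (a : ℕ → R) : linearComplexity a 0 = 0 :=
  Nat.le_zero.mp (linearComplexity_le_self a 0)

theorem le_linearComplexity_add_of_lt (h : linearComplexity a k < linearComplexity a (k + 1)) :
    k + 1 ≤ linearComplexity a k + linearComplexity a (k + 1) := by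
  obtain ⟨P, hP, hPd⟩ := exists_isRecurrence_natDegree_eq a k
  obtain ⟨Q, hQ, hQd⟩ := exists_isRecurrence_natDegree_eq a (k + 1)
  by_contra hlt
  exact hP.momentFunctional_ne_zero_of_lt hPd h
    ((hP.momentFunctional_eq (hQ.mono k.le_succ) (by omega)).trans (hQ.2 _ (by omega)))

end Recurrences

section BerlekampMassey

variable {F : Type*} [Field F] {a : ℕ → F} {m k : ℕ} {P Q : F[X]}

/-- The Berlekamp–Massey update: `Q` is shifted and scaled so as to cancel the nonzero
discrepancy of `P` at `k`. -/
lemma linearComplexity_succ_le_max {j : ℕ} (hP : IsRecurrence a k P) (hQ : IsRecurrence a j Q)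
    (hjk : j < k) (hQj : Q.natDegree ≤ j)
    (hδ : momentFunctional a (X ^ (j - Q.natDegree) * Q) ≠ 0) :
    linearComplexity a (k + 1) ≤ max P.natDegree (k - j + Q.natDegree) := by
  set D := max P.natDegree (k - j + Q.natDegree)
  set c := momentFunctional a (X ^ (k - P.natDegree) * P)
    / momentFunctional a (X ^ (j - Q.natDegree) * Q)
  set e := D - P.natDegree
  set e' := D - (k - j + Q.natDegree)
  have hA : (X ^ e * P).Monic := (monic_X_pow e).mul hP.1
  have hAd : (X ^ e * P).natDegree = D := by
    rw [(monic_X_pow e).natDegree_mul hP.1, natDegree_X_pow]; omega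
  have hBd : (C c * (X ^ e' * Q)).natDegree < D :=
    natDegree_C_mul_le _ _ |>.trans natDegree_mul_le |>.trans_lt <| by
      rw [natDegree_X_pow]; omega
  have hRd : (X ^ e * P - C c * (X ^ e' * Q)).natDegree = D := by
    rw [natDegree_sub_eq_left_of_natDegree_lt (hAd ▸ hBd), hAd]
  refine hRd ▸ linearComplexity_le ⟨hA.sub_of_left (degree_lt_degree (hAd ▸ hBd)), ?_⟩
  intro t ht
  rw [hRd] at ht
  rw [mul_sub, map_sub, ← mul_assoc, ← pow_add, mul_left_comm, C_mul', map_smul, ← mul_assoc,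
    ← pow_add, smul_eq_mul]
  rcases (by omega : t + D < k ∨ t + D = k) with hlt | heq
  · rw [hP.2 _ (by omega), hQ.2 _ (by omega), mul_zero, sub_zero]
  · rw [show t + e = k - P.natDegree by omega, show t + e' = j - Q.natDegree by omega,
      div_mul_cancel₀ _ hδ, sub_self]

/-- For the last jump `j < k` of the profile (so `L (j + 1) = L k`), the induction hypothesis
gives `L j + L k = j + 1`, and the update above then gives `L (k + 1) ≤ k + 1 - L k`. -/
theorem linearComplexity_add_of_lt (h : linearComplexity a k < linearComplexity a (k + 1)) :
    linearComplexity a k + linearComplexity a (k + 1) = k + 1 := by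
  induction k using Nat.strong_induction_on with
  | _ k ih =>
  refine le_antisymm ?_ (le_linearComplexity_add_of_lt h)
  rcases Nat.eq_zero_or_pos (linearComplexity a k) with h0 | hpos
  · rw [h0, zero_add]
    exact linearComplexity_le_self a (k + 1)
  obtain ⟨j, -, hjk, hj, hj1⟩ := (linearComplexity_mono a).exists_crossing
    (s := linearComplexity a k - 1) (t := 0) (m := k) (by simp) (by omega)
  have hj1k := linearComplexity_mono a (show j + 1 ≤ k by omega)
  have hjump := ih j hjk (by omega)
  obtain ⟨P, hP, hPd⟩ := exists_isRecurrence_natDegree_eq a k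
  obtain ⟨Q, hQ, hQd⟩ := exists_isRecurrence_natDegree_eq a j
  have := linearComplexity_succ_le_max hP hQ hjk (hQd ▸ linearComplexity_le_self a j)
    (hQ.momentFunctional_ne_zero_of_lt hQd (by omega))
  omega

lemma lt_linearComplexity_of_le_of_lt {n s M : ℕ} (h₁ : linearComplexity a (n + s) ≤ s)
    (h₂ : s < linearComplexity a M) : n < linearComplexity a M := by
  obtain ⟨j, hj, hjM, hjs, hjs'⟩ := (linearComplexity_mono a).exists_crossing h₁ h₂
  have := linearComplexity_add_of_lt (hjs.trans_lt hjs')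
  have := linearComplexity_mono a (show j + 1 ≤ M by omega)
  omega

lemma exists_linearComplexity_add_eq (h : 0 < linearComplexity a m) :
    ∃ j < m, linearComplexity a (j + 1) = linearComplexity a m ∧
      linearComplexity a j + linearComplexity a m = j + 1 := by
  obtain ⟨j, -, hjm, hj, hj1⟩ := (linearComplexity_mono a).exists_crossing
    (s := linearComplexity a m - 1) (t := 0) (m := m) (by simp) (by omega)
  have hj1m : linearComplexity a (j + 1) = linearComplexity a m :=
    le_antisymm (linearComplexity_mono a (by omega)) (by omega)
  exact ⟨j, hjm, hj1m, hj1m ▸ linearComplexity_add_of_lt (by omega)⟩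

lemma linearComplexity_update_succ_of_lt (h : m < 2 * linearComplexity a m) (x : F) :
    linearComplexity (Function.update a m x) (m + 1) = linearComplexity a m := by
  have h0 := linearComplexity_update a m x
  have hmono := linearComplexity_mono (Function.update a m x) (m.le_add_right 1)
  by_contra hne
  have := linearComplexity_add_of_lt (a := Function.update a m x) (k := m) (by omega)
  omega

lemma exists_linearComplexity_update_succ [DecidableEq F] (h : 2 * linearComplexity a m ≤ m) :
    ∃ x₀, ∀ x, linearComplexity (Function.update a m x) (m + 1)
      = if x = x₀ then linearComplexity a m else m + 1 - linearComplexity a m := by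
  obtain ⟨P, hP, hPd⟩ := exists_isRecurrence_natDegree_eq a m
  refine ⟨a m - momentFunctional a (X ^ (m - P.natDegree) * P), fun x => ?_⟩
  have hPx := (isRecurrence_update_iff (x := x)).mpr hP
  have hδ : momentFunctional (Function.update a m x) (X ^ (m - P.natDegree) * P)
      = x - (a m - momentFunctional a (X ^ (m - P.natDegree) * P)) := by
    rw [momentFunctional_update, coeff_X_pow_mul', if_pos (Nat.sub_le _ _),
      Nat.sub_sub_self (by omega), hP.1.coeff_natDegree]
    ring
  have h0 := linearComplexity_update a m x
  have hmono := linearComplexity_mono (Function.update a m x) (m.le_add_right 1)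
  split_ifs with hx
  · exact le_antisymm (hPd ▸ linearComplexity_le (hPx.succ (by rw [hδ, hx, sub_self])))
      (by omega)
  · have hlt : linearComplexity a m < linearComplexity (Function.update a m x) (m + 1) := by
      refine lt_of_le_of_ne (by omega) fun heq => hx ?_
      obtain ⟨Q, hQ, hQd⟩ := exists_isRecurrence_natDegree_eq (Function.update a m x) (m + 1)
      have := (hPx.momentFunctional_eq (hQ.mono (m.le_add_right 1)) (by omega)).trans
        (hQ.2 _ (by omega))
      rwa [hδ, sub_eq_zero] at this
    have := linearComplexity_add_of_lt (a := Function.update a m x) (k := m) (by omega)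
    omega

end BerlekampMassey

def hankel {R : Type*} (n : ℕ) (a : ℕ → R) : Matrix (Fin n) (Fin n) R :=
  Matrix.of fun i j => a (i + j)

lemma isHankel_hankel {R : Type*} (n : ℕ) (a : ℕ → R) : IsHankel (hankel n a) :=
  fun i j r s h => by simp only [hankel, Matrix.of_apply, h]

section HankelKernel

variable {R : Type*} [CommRing R] {a : ℕ → R} {n : ℕ} {V : R[X]}

lemma hankel_mulVec_degreeLTEquiv (a : ℕ → R) (p : degreeLT R n) (i : Fin n) :
    (hankel n a *ᵥ degreeLTEquiv R n p) i = momentFunctional a (X ^ (i : ℕ) * (p : R[X])) := by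
  have hp : (p : R[X]).natDegree < n := by
    rcases eq_or_ne (p : R[X]) 0 with h | h
    · rw [h, natDegree_zero]; exact i.pos
    · exact (natDegree_lt_iff_degree_lt h).mpr (mem_degreeLT.mp p.2)
  rw [← mul_one (p : R[X]), momentFunctional_X_pow_mul_mul_eq_sum a i hp]
  simp only [mul_one, momentFunctional_X_pow, Matrix.mulVec, dotProduct, hankel, Matrix.of_apply]
  rw [← Fin.sum_univ_eq_sum_range (fun j => (p : R[X]).coeff j * a (i + j))]
  exact Finset.sum_congr rfl fun j _ => mul_comm _ _

/-- The kernel of the Hankel matrix, a vector `v` being read as the polynomial `∑ vⱼ Xʲ`. -/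
noncomputable def hankelKernel (a : ℕ → R) (n : ℕ) : Submodule R R[X] :=
  (LinearMap.ker (hankel n a).mulVecLin).map
    ((degreeLT R n).subtype ∘ₗ (degreeLTEquiv R n).symm.toLinearMap)

lemma mem_hankelKernel :
    V ∈ hankelKernel a n ↔ V.degree < n ∧ ∀ i < n, momentFunctional a (X ^ i * V) = 0 := by
  constructor
  · rintro ⟨v, hv, rfl⟩
    obtain ⟨p, rfl⟩ := (degreeLTEquiv R n).surjective v
    rw [SetLike.mem_coe, LinearMap.mem_ker, Matrix.mulVecLin_apply] at hv
    simp only [LinearMap.coe_comp, LinearEquiv.coe_coe, Function.comp_apply,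
      LinearEquiv.symm_apply_apply, Submodule.subtype_apply]
    refine ⟨mem_degreeLT.mp p.2, fun i hi => ?_⟩
    rw [← hankel_mulVec_degreeLTEquiv a p ⟨i, hi⟩, hv, Pi.zero_apply]
  · rintro ⟨hdeg, hV⟩
    set p : degreeLT R n := ⟨V, mem_degreeLT.mpr hdeg⟩
    refine ⟨degreeLTEquiv R n p, ?_, by simp [p]⟩
    rw [SetLike.mem_coe, LinearMap.mem_ker, Matrix.mulVecLin_apply]
    funext i
    rw [hankel_mulVec_degreeLTEquiv]
    exact hV i i.2

end HankelKernel

section HankelRank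

variable {F : Type*} [Field F] {a : ℕ → F} {n m : ℕ} {P V : F[X]}

lemma finrank_hankelKernel (a : ℕ → F) (n : ℕ) :
    finrank F (hankelKernel a n) = finrank F (LinearMap.ker (hankel n a).mulVecLin) :=
  (Submodule.equivMapOfInjective _ (by
    rw [LinearMap.coe_comp]
    exact (degreeLT F n).injective_subtype.comp (degreeLTEquiv F n).symm.injective)
    _).finrank_eq.symm

lemma linearComplexity_le_of_mem_hankelKernel (hV : V ∈ hankelKernel a n) (hV0 : V ≠ 0) :
    linearComplexity a (n + V.natDegree) ≤ V.natDegree := by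
  have hVa := (mem_hankelKernel.mp hV).2
  rw [← natDegree_mul_leadingCoeff_inv V hV0]
  refine linearComplexity_le ⟨monic_mul_leadingCoeff_inv hV0, fun t ht => ?_⟩
  rw [natDegree_mul_leadingCoeff_inv V hV0] at ht
  rw [← mul_assoc, mul_comm, C_mul', map_smul, hVa t (by omega), smul_zero]

lemma IsRecurrence.mul_mem_hankelKernel (hP : IsRecurrence a m P) {p : F[X]} {k : ℕ}
    (hp : p ∈ degreeLT F k) (hk : k + P.natDegree ≤ n) (hm : n + k + P.natDegree ≤ m + 1) :
    p * P ∈ hankelKernel a n := by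
  rcases eq_or_ne p 0 with rfl | hp0
  · rw [zero_mul]
    exact zero_mem _
  have hpk : p.natDegree < k := (natDegree_lt_iff_degree_lt hp0).mpr (mem_degreeLT.mp hp)
  refine mem_hankelKernel.mpr ⟨?_, fun i hi => ?_⟩
  · rw [← natDegree_lt_iff_degree_lt (mul_ne_zero hp0 hP.1.ne_zero),
      natDegree_mul hp0 hP.1.ne_zero]
    omega
  · rw [momentFunctional_X_pow_mul_mul_eq_sum a i hpk]
    exact Finset.sum_eq_zero fun j hj => by
      rw [hP.2 _ (by simp at hj; omega), mul_zero]

lemma finrank_eq_of_le_degreeLT {K : Submodule F F[X]} {k : ℕ} (hP : P ≠ 0)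
    (hle : K ≤ degreeLT F (k + P.natDegree)) (hdisj : Disjoint K (degreeLT F P.natDegree))
    (hmul : ∀ p ∈ degreeLT F k, p * P ∈ K) : finrank F K = k := by
  have hfin (N : ℕ) : finrank F (degreeLT F N) = N := by
    rw [(degreeLTEquiv F N).finrank_eq, Module.finrank_fin_fun]
  have (N : ℕ) : Module.Finite F (degreeLT F N) := Module.Finite.equiv (degreeLTEquiv F N).symm
  have : Module.Finite F K := Submodule.finiteDimensional_of_le hle
  apply le_antisymm
  · have hsup := Submodule.finrank_sup_add_finrank_inf_eq K (degreeLT F P.natDegree)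
    rw [hdisj.eq_bot, finrank_bot, hfin] at hsup
    have := Submodule.finrank_mono (sup_le hle (degreeLT_mono (Nat.le_add_left _ k)))
    rw [hfin] at this
    omega
  · have hinj : Function.Injective (LinearMap.mulRight F P) := mul_left_injective₀ hP
    calc k = finrank F ((degreeLT F k).map (LinearMap.mulRight F P)) := by
          rw [← (Submodule.equivMapOfInjective _ hinj _).finrank_eq, hfin]
      _ ≤ finrank F K := Submodule.finrank_mono (Submodule.map_le_iff_le_comap.mpr hmul)

lemma finrank_hankelKernel_of_le (h : linearComplexity a (2 * n - 1) ≤ n) :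
    finrank F (hankelKernel a n) = n - linearComplexity a (2 * n - 1) := by
  obtain ⟨P, hP, hPd⟩ := exists_isRecurrence_natDegree_eq a (2 * n - 1)
  refine finrank_eq_of_le_degreeLT hP.1.ne_zero (fun V hV => ?_) ?_
    fun p hp => hP.mul_mem_hankelKernel hp (by omega) (by omega)
  · rw [hPd, Nat.sub_add_cancel h]
    exact mem_degreeLT.mpr (mem_hankelKernel.mp hV).1
  · refine Submodule.disjoint_def.mpr fun V hVK hVd => by_contra fun hV0 => ?_
    have hVd' := (natDegree_lt_iff_degree_lt hV0).mpr (mem_degreeLT.mp hVd)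
    have := lt_linearComplexity_of_le_of_lt (linearComplexity_le_of_mem_hankelKernel hVK hV0)
      (hPd ▸ hVd')
    omega

/-- Here the kernel is spanned by multiples of the shortest recurrence for the first `T` terms,
`T` being the last jump of the complexity profile. -/
lemma finrank_hankelKernel_of_lt (h : n < linearComplexity a (2 * n - 1)) :
    finrank F (hankelKernel a n) = linearComplexity a (2 * n - 1) - n := by
  obtain ⟨T, hT, hT1, hTL⟩ :=
    exists_linearComplexity_add_eq (by omega : 0 < linearComplexity a (2 * n - 1))
  obtain ⟨P, hP, hPd⟩ := exists_isRecurrence_natDegree_eq a T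
  refine finrank_eq_of_le_degreeLT hP.1.ne_zero (fun V hV => ?_) ?_
    fun p hp => hP.mul_mem_hankelKernel hp (by omega) (by omega)
  · rcases eq_or_ne V 0 with rfl | hV0
    · exact zero_mem _
    refine mem_degreeLT.mpr ((natDegree_lt_iff_degree_lt hV0).mp ?_)
    have h1 := linearComplexity_le_of_mem_hankelKernel hV hV0
    have h2 := (natDegree_lt_iff_degree_lt hV0).mpr (mem_hankelKernel.mp hV).1
    by_contra h3
    have := linearComplexity_mono a (show T + 1 ≤ n + V.natDegree by omega)
    omega
  · refine Submodule.disjoint_def.mpr fun V hVK hVd => by_contra fun hV0 => ?_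
    have hVd' := (natDegree_lt_iff_degree_lt hV0).mpr (mem_degreeLT.mp hVd)
    have := lt_linearComplexity_of_le_of_lt (linearComplexity_le_of_mem_hankelKernel hVK hV0)
      (hPd ▸ hVd')
    omega

theorem rank_hankel (a : ℕ → F) (n : ℕ) :
    (hankel n a).rank
      = min (linearComplexity a (2 * n - 1)) (2 * n - linearComplexity a (2 * n - 1)) := by
  have hrk := LinearMap.finrank_range_add_finrank_ker (hankel n a).mulVecLin
  rw [Module.finrank_fin_fun, ← finrank_hankelKernel] at hrk
  rw [Matrix.rank]
  have := linearComplexity_le_self a (2 * n - 1)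
  rcases le_or_gt (linearComplexity a (2 * n - 1)) n with h | h
  · rw [finrank_hankelKernel_of_le h] at hrk
    omega
  · rw [finrank_hankelKernel_of_lt h] at hrk
    omega

end HankelRank

section Counting

variable {F : Type*} [Field F] {m : ℕ}

def extendByZero {R : Type*} [Zero R] (b : Fin m → R) : ℕ → R :=
  fun t => if h : t < m then b ⟨t, h⟩ else 0

lemma extendByZero_snoc {R : Type*} [Zero R] (b : Fin m → R) (x : R) :
    extendByZero (Fin.snoc b x : Fin (m + 1) → R) = Function.update (extendByZero b) m x := by
  funext t
  rcases lt_trichotomy t m with h | rfl | h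
  · rw [Function.update_of_ne h.ne]
    simp [extendByZero, h, Nat.lt_succ_of_lt h, Fin.snoc, Fin.castLT]
  · simp [extendByZero, Fin.snoc]
  · rw [Function.update_of_ne h.ne']
    simp [extendByZero, show ¬ t < m by omega, show ¬ t < m + 1 by omega]

noncomputable def tupleComplexity (b : Fin m → F) : ℕ := linearComplexity (extendByZero b) m

lemma tupleComplexity_le (b : Fin m → F) : tupleComplexity b ≤ m :=
  linearComplexity_le_self _ m

variable [Fintype F]

lemma card_filter_tupleComplexity_snoc (b : Fin m → F) (c : ℕ) :
    #{x | tupleComplexity (Fin.snoc b x : Fin (m + 1) → F) = c}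
      = if m < 2 * tupleComplexity b then (if tupleComplexity b = c then Fintype.card F else 0)
        else (if tupleComplexity b = c then 1 else 0)
          + (if m + 1 - tupleComplexity b = c then Fintype.card F - 1 else 0) := by
  classical
  by_cases hb : m < 2 * tupleComplexity b
  · rw [if_pos hb]
    simp only [tupleComplexity, extendByZero_snoc, linearComplexity_update_succ_of_lt hb]
    by_cases hc : linearComplexity (extendByZero b) m = c <;> simp [hc]
  · rw [if_neg hb]
    obtain ⟨x₀, hx₀⟩ := exists_linearComplexity_update_succ (not_lt.mp hb)
    simp only [tupleComplexity, extendByZero_snoc, hx₀]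
    exact card_filter_ite_eq x₀ _ _ c

variable (F) in
noncomputable def complexityCount (m c : ℕ) : ℕ := #{b : Fin m → F | tupleComplexity b = c}

lemma complexityCount_zero (c : ℕ) : complexityCount F 0 c = if c = 0 then 1 else 0 := by
  have (b : Fin 0 → F) : tupleComplexity b = 0 := Nat.le_zero.mp (tupleComplexity_le b)
  by_cases hc : c = 0 <;> simp [complexityCount, this, hc, eq_comm]

lemma complexityCount_of_lt {c : ℕ} (h : m < c) : complexityCount F m c = 0 := by
  simp only [complexityCount, card_eq_zero, filter_eq_empty_iff]
  exact fun b _ hb => absurd (tupleComplexity_le b) (by omega)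

lemma complexityCount_succ_of_two_mul_le {c : ℕ} (h : 2 * c ≤ m) :
    complexityCount F (m + 1) c = complexityCount F m c := by
  rw [complexityCount, card_filter_snoc, complexityCount, card_filter]
  refine Finset.sum_congr rfl fun b _ => ?_
  rw [card_filter_tupleComplexity_snoc]
  split_ifs <;> omega

lemma complexityCount_succ_of_two_mul_eq {c : ℕ} (h : 2 * c = m + 1) :
    complexityCount F (m + 1) c = Fintype.card F * complexityCount F m c := by
  rw [complexityCount, card_filter_snoc, complexityCount, card_filter, mul_sum]
  refine Finset.sum_congr rfl fun b _ => ?_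
  rw [card_filter_tupleComplexity_snoc]
  split_ifs <;> omega

lemma complexityCount_succ_of_lt_two_mul {c : ℕ} (h : m + 2 ≤ 2 * c) (hc : c ≤ m + 1) :
    complexityCount F (m + 1) c = Fintype.card F * complexityCount F m c
      + (Fintype.card F - 1) * complexityCount F m (m + 1 - c) := by
  rw [complexityCount, card_filter_snoc, complexityCount, complexityCount, card_filter,
    card_filter, mul_sum, mul_sum, ← sum_add_distrib]
  refine Finset.sum_congr rfl fun b _ => ?_
  rw [card_filter_tupleComplexity_snoc]
  have := tupleComplexity_le b
  split_ifs <;> omega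

theorem complexityCount_eq (m c : ℕ) :
    complexityCount F m c =
      if c = 0 then 1
      else if m < c then 0
      else if 2 * c ≤ m then (Fintype.card F - 1) * Fintype.card F ^ (2 * c - 1)
      else (Fintype.card F - 1) * Fintype.card F ^ (2 * (m - c)) := by
  obtain ⟨p, hp⟩ : ∃ p, Fintype.card F = p + 1 :=
    ⟨_, (Nat.succ_pred_eq_of_pos Fintype.card_pos).symm⟩
  rw [hp, Nat.add_sub_cancel]
  induction m generalizing c with
  | zero => rw [complexityCount_zero]; split_ifs <;> omega
  | succ m ih =>
    rcases (by omega : 2 * c ≤ m ∨ 2 * c = m + 1 ∨ (m + 2 ≤ 2 * c ∧ c ≤ m) ∨ c = m + 1 ∨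
      m + 1 < c) with h | h | h | rfl | h
    · rw [complexityCount_succ_of_two_mul_le h, ih]
      split_ifs <;> omega
    · rw [complexityCount_succ_of_two_mul_eq h, hp, ih]
      simp (disch := omega) only [if_pos, if_neg]
      rw [show 2 * c - 1 = 2 * (m - c) + 1 by omega]
      ring
    · rw [complexityCount_succ_of_lt_two_mul (by omega) (by omega), hp, Nat.add_sub_cancel,
        ih, ih]
      simp (disch := omega) only [if_pos, if_neg]
      rw [show 2 * (m + 1 - c) - 1 = 2 * (m - c) + 1 by omega,
        show 2 * (m + 1 - c) = 2 * (m - c) + 2 by omega]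
      ring
    · rw [complexityCount_succ_of_lt_two_mul (by omega) le_rfl, hp, Nat.add_sub_cancel, ih, ih,
        Nat.sub_self]
      simp (disch := omega) only [if_pos, if_neg, ↓reduceIte]
      ring
    · rw [complexityCount_of_lt h]
      simp (disch := omega) only [if_pos, if_neg]

theorem card_min_tupleComplexity_le {n r : ℕ} (hr : r < n) :
    #{b : Fin (2 * n - 1) → F | min (tupleComplexity b) (2 * n - tupleComplexity b) ≤ r}
      = Fintype.card F ^ (2 * r) := by
  obtain ⟨p, hp⟩ : ∃ p, Fintype.card F = p + 1 :=
    ⟨_, (Nat.succ_pred_eq_of_pos Fintype.card_pos).symm⟩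
  have hcount (c : ℕ) := complexityCount_eq (F := F) (2 * n - 1) c
  simp only [hp, Nat.add_sub_cancel] at hcount
  induction r with
  | zero =>
    refine (Eq.trans ?_ (hcount 0)).trans (by simp)
    unfold complexityCount
    congr 1
    ext b
    simp only [mem_filter, mem_univ, true_and]
    have := tupleComplexity_le b
    omega
  | succ r ih =>
    have h₁ := hcount (r + 1)
    have h₂ := hcount (2 * n - (r + 1))
    simp (disch := omega) only [if_pos, if_neg] at h₁ h₂
    simp only [complexityCount] at h₁ h₂
    have hsplit (b : Fin (2 * n - 1) → F) :
        (if min (tupleComplexity b) (2 * n - tupleComplexity b) ≤ r + 1 then 1 else 0)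
          = (if min (tupleComplexity b) (2 * n - tupleComplexity b) ≤ r then 1 else 0)
            + (if tupleComplexity b = r + 1 then 1 else 0)
            + (if tupleComplexity b = 2 * n - (r + 1) then 1 else 0) := by
      have := tupleComplexity_le b
      split_ifs <;> omega
    rw [card_filter, sum_congr rfl fun b _ => hsplit b, sum_add_distrib, sum_add_distrib,
      ← card_filter, ← card_filter, ← card_filter, ih (by omega), h₁, h₂, hp,
      show 2 * (r + 1) - 1 = 2 * r + 1 by omega, show 2 * n - 1 - (2 * n - (r + 1)) = r by omega]
    ring

end Counting

def hankelEquiv (R : Type*) [Zero R] (n : ℕ) :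
    (Fin (2 * n - 1) → R) ≃ {M : Matrix (Fin n) (Fin n) R // IsHankel M} where
  toFun b := ⟨hankel n (extendByZero b), isHankel_hankel n _⟩
  invFun M k := M.1 ⟨min (k : ℕ) (n - 1), by omega⟩ ⟨k - min (k : ℕ) (n - 1), by omega⟩
  left_inv b := by
    funext k
    have hk : min (k : ℕ) (n - 1) + (k - min (k : ℕ) (n - 1)) = k := by omega
    simp only [hankel, Matrix.of_apply, extendByZero, hk, dif_pos k.isLt]
  right_inv M := by
    ext i j
    simp only [hankel, Matrix.of_apply, extendByZero,
      dif_pos (by omega : (i : ℕ) + j < 2 * n - 1)]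
    exact M.2 _ _ _ _ (by simp only; omega)

/-- For `0 ≤ r < n`, the number of `n × n` Hankel matrices over `F_q` of rank at most `r`
equals `q^(2r)`. -/
theorem hankel_rank_le_card (F : Type*) [Field F] [Fintype F] (n r : ℕ) (hr : r < n) :
    Nat.card {M : Matrix (Fin n) (Fin n) F // IsHankel M ∧ M.rank ≤ r}
      = Fintype.card F ^ (2 * r) := by
  calc Nat.card {M : Matrix (Fin n) (Fin n) F // IsHankel M ∧ M.rank ≤ r}
      = Nat.card {b : Fin (2 * n - 1) → F // (hankel n (extendByZero b)).rank ≤ r} :=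
        Nat.card_congr ((Equiv.subtypeSubtypeEquivSubtypeInter _ _).symm.trans
          (Equiv.subtypeEquiv (hankelEquiv F n) fun _ => Iff.rfl).symm)
    _ = #{b : Fin (2 * n - 1) → F | min (tupleComplexity b) (2 * n - tupleComplexity b) ≤ r} :=
        by simp only [Nat.card_eq_fintype_card, Fintype.card_subtype, rank_hankel]; rfl
    _ = Fintype.card F ^ (2 * r) := card_min_tupleComplexity_le hr
end

section
/- Let u, v ∈ F[X] with deg u = n and deg v ≤ n. Then the n-th order Bezoutian matrix B_n(u,v) is nonsingular if and only if u and v are coprime. -/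
open Polynomial

section BezAux

variable {F : Type*} [Field F]

private lemma bez_coeff_sum_C_mul_X_pow {R : Type*} [Semiring R] {n : ℕ} (a : Fin n → R) (k : ℕ) :
    (∑ i : Fin n, C (a i) * X ^ (i : ℕ)).coeff k =
      if h : k < n then a ⟨k, h⟩ else 0 := by
  rw [finset_sum_coeff]
  split
  · next h =>
    rw [Finset.sum_eq_single (⟨k, h⟩ : Fin n)]
    · simp [coeff_C_mul, coeff_X_pow]
    · intro j _ hj
      have hkj : k ≠ (j : ℕ) := by
        intro he
        exact hj (Fin.ext he.symm)
      simp [coeff_C_mul, coeff_X_pow, hkj]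
    · simp
  · next h =>
    apply Finset.sum_eq_zero
    intro j _
    have hkj : k ≠ (j : ℕ) := by have := j.2; omega
    simp [coeff_C_mul, coeff_X_pow, hkj]

private lemma bez_coeff_sum_range {R : Type*} [Semiring R] (N : ℕ) (f : ℕ → R) (k : ℕ) :
    (∑ m ∈ Finset.range N, C (f m) * X ^ m).coeff k = if k < N then f k else 0 := by
  rw [finset_sum_coeff]
  split
  · next h =>
    rw [Finset.sum_eq_single k]
    · simp [coeff_C_mul, coeff_X_pow]
    · intro m _ hm
      simp [coeff_C_mul, coeff_X_pow, Ne.symm hm]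
    · intro hk; exact absurd (Finset.mem_range.mpr h) hk
  · next h =>
    apply Finset.sum_eq_zero
    intro m hm
    have : k ≠ m := by have := Finset.mem_range.mp hm; omega
    simp [coeff_C_mul, coeff_X_pow, this]

noncomputable def bezColf {n : ℕ} (b : Matrix (Fin n) (Fin n) F) (j : Fin n) : F[X] :=
  ∑ i : Fin n, C (b i j) * X ^ (i : ℕ)

noncomputable def bezColp {n : ℕ} (b : Matrix (Fin n) (Fin n) F) (k : ℕ) : F[X] :=
  if h : k < n then bezColf b ⟨k, h⟩ else 0

noncomputable def bezT (u : F[X]) (n k : ℕ) : F[X] :=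
  ∑ m ∈ Finset.range (n - k), C (u.coeff (k + 1 + m)) * X ^ m

noncomputable def bezP (u : F[X]) {n : ℕ} (w : Fin n → F) : F[X] :=
  ∑ j : Fin n, C (w j) * bezT u n (j : ℕ)

private lemma bezT_rec {n : ℕ} {u : F[X]} (hun : u.natDegree = n) (k : ℕ) :
    bezT u n k = X * bezT u n (k + 1) + C (u.coeff (k + 1)) := by
  rcases lt_or_ge k n with hk | hk
  · have h1 : n - k = (n - (k + 1)) + 1 := by omega
    rw [bezT, bezT, h1, Finset.sum_range_succ', Finset.mul_sum]
    congr 1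
    · refine Finset.sum_congr rfl fun m _ => ?_
      have he : k + 1 + (m + 1) = k + 1 + 1 + m := by omega
      rw [he, pow_succ]
      ring
    · simp
  · have h0 : n - k = 0 := by omega
    have h1 : n - (k + 1) = 0 := by omega
    have hc : u.coeff (k + 1) = 0 := coeff_eq_zero_of_natDegree_lt (by omega)
    simp [bezT, h0, h1, hc]

private lemma bezT_coeff (u : F[X]) (n k m : ℕ) :
    (bezT u n k).coeff m = if m < n - k then u.coeff (k + 1 + m) else 0 :=
  bez_coeff_sum_range _ _ _

private lemma bezP_coeff (u : F[X]) {n : ℕ} (w : Fin n → F) (m : ℕ) :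
    (bezP u w).coeff m
      = ∑ j : Fin n, w j * (if m < n - (j : ℕ) then u.coeff ((j : ℕ) + 1 + m) else 0) := by
  rw [bezP, finset_sum_coeff]
  refine Finset.sum_congr rfl fun j _ => ?_
  rw [coeff_C_mul, bezT_coeff]

private lemma bezP_degree_lt (u : F[X]) {n : ℕ} (w : Fin n → F) :
    (bezP u w).degree < (n : WithBot ℕ) := by
  rw [degree_lt_iff_coeff_zero]
  intro m hm
  rw [bezP_coeff]
  apply Finset.sum_eq_zero
  intro j _
  rw [if_neg (by omega)]
  simp

private lemma bezP_ne_zero {u : F[X]} {n : ℕ} (hun : u.natDegree = n) (hu0 : u ≠ 0)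
    {w : Fin n → F} (hw : w ≠ 0) : bezP u w ≠ 0 := by
  classical
  have hlc : u.coeff n ≠ 0 := by
    have h := leadingCoeff_ne_zero.mpr hu0
    rwa [leadingCoeff, hun] at h
  have hne : (Finset.univ.filter fun j => w j ≠ 0).Nonempty := by
    rcases Function.ne_iff.mp hw with ⟨j, hj⟩
    exact ⟨j, by simpa using hj⟩
  set j0 := Finset.min' _ hne with hj0def
  have hj0 : w j0 ≠ 0 := by
    have := Finset.min'_mem _ hne
    simpa using this
  have hmin : ∀ j : Fin n, j < j0 → w j = 0 := by
    intro j hj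
    by_contra hc
    exact absurd (Finset.min'_le _ j (by simp [hc])) (not_le.mpr hj)
  intro h0
  have hc := congrArg (fun p => p.coeff (n - 1 - (j0 : ℕ))) h0
  simp only [coeff_zero] at hc
  rw [bezP_coeff] at hc
  have hj0n : (j0 : ℕ) < n := j0.isLt
  rw [Finset.sum_eq_single j0] at hc
  · rw [if_pos (by omega)] at hc
    have harg : (j0 : ℕ) + 1 + (n - 1 - (j0 : ℕ)) = n := by omega
    rw [harg] at hc
    exact hj0 ((mul_eq_zero.mp hc).resolve_right hlc)
  · intro j _ hj
    rcases lt_or_gt_of_ne hj with h | h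
    · rw [hmin j h, zero_mul]
    · have hjv : (j0 : ℕ) < (j : ℕ) := h
      have hjn : (j : ℕ) < n := j.isLt
      rw [if_neg (by omega), mul_zero]
  · intro h; exact absurd (Finset.mem_univ j0) h

end BezAux

/-- `IsBezoutian n u v b` says that the `n × n` matrix `b` is the `n`-th order Bezoutian of
`u` and `v`, i.e. `u(X)v(Y) - v(X)u(Y) = (X - Y) * ∑_{i,j=1}^n b_{ij} X^{i-1} Y^{j-1}`,
formulated in `F[X][Y]` (the inner variable is `X`, the outer one is `Y`). -/
def IsBezoutian {F : Type*} [Field F] (n : ℕ) (u v : F[X])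
    (b : Matrix (Fin n) (Fin n) F) : Prop :=
  Polynomial.C u * (v.map Polynomial.C) - Polynomial.C v * (u.map Polynomial.C)
    = (Polynomial.C (Polynomial.X : F[X]) - Polynomial.X) *
        ∑ i : Fin n, ∑ j : Fin n,
          Polynomial.C (Polynomial.C (b i j) * Polynomial.X ^ (i : ℕ)) *
            Polynomial.X ^ (j : ℕ)

/-- If `deg u = n` and `deg v ≤ n`, the `n`-th order Bezoutian of `u` and `v` is
nonsingular if and only if `u` and `v` are coprime. -/
theorem bezoutian_nonsingular_iff_coprime (F : Type*) [Field F] (n : ℕ) (hn : 1 ≤ n)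
    (u v : F[X]) (hu : u.degree = n) (hv : v.degree ≤ n)
    (b : Matrix (Fin n) (Fin n) F) (hb : IsBezoutian n u v b) :
    IsUnit b.det ↔ IsCoprime u v := by
  classical
  have hu0 : u ≠ 0 := fun h => by simp [h] at hu
  have hun : u.natDegree = n := natDegree_eq_of_degree_eq_some hu
  -- rewrite the Bezoutian identity
  unfold IsBezoutian at hb
  have hS : (∑ i : Fin n, ∑ j : Fin n, C (C (b i j) * X ^ (i : ℕ)) * X ^ (j : ℕ))
      = ∑ j : Fin n, C (bezColf b j) * X ^ (j : ℕ) := by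
    rw [Finset.sum_comm]
    refine Finset.sum_congr rfl fun j _ => ?_
    rw [bezColf, map_sum, Finset.sum_mul]
  rw [hS] at hb
  have Scoeff : ∀ k : ℕ,
      (∑ j : Fin n, C (bezColf b j) * X ^ (j : ℕ)).coeff k = bezColp b k := by
    intro k
    rw [bez_coeff_sum_C_mul_X_pow]
    rfl
  have hid : ∀ k : ℕ, u * C (v.coeff k) - v * C (u.coeff k)
      = X * bezColp b k
        - ((X : F[X][X]) * ∑ j : Fin n, C (bezColf b j) * X ^ (j : ℕ)).coeff k := by
    intro k
    calc u * C (v.coeff k) - v * C (u.coeff k)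
        = (C u * (v.map C) - C v * (u.map C)).coeff k := by
          rw [coeff_sub, coeff_C_mul, coeff_C_mul, coeff_map, coeff_map]
      _ = ((C (X : F[X]) - X) * ∑ j : Fin n, C (bezColf b j) * X ^ (j : ℕ)).coeff k := by
          rw [hb]
      _ = _ := by
          rw [sub_mul, coeff_sub, coeff_C_mul, Scoeff]
  have hid0 : u * C (v.coeff 0) - v * C (u.coeff 0) = X * bezColp b 0 := by
    have h := hid 0
    rwa [mul_coeff_zero, coeff_X_zero, zero_mul, sub_zero] at h
  have hidS : ∀ k : ℕ, u * C (v.coeff (k + 1)) - v * C (u.coeff (k + 1))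
      = X * bezColp b (k + 1) - bezColp b k := by
    intro k
    have h := hid (k + 1)
    rwa [coeff_X_mul, Scoeff] at h
  -- downward induction: each column polynomial is ≡ v * bezT mod u
  have hbase : ∀ k, n ≤ k → ∃ s, bezColp b k = v * bezT u n k + u * s := by
    intro k hk
    refine ⟨0, ?_⟩
    rw [bezColp, dif_neg (by omega)]
    rw [bezT, Nat.sub_eq_zero_of_le hk]
    simp
  have hstep : ∀ k, (∃ s, bezColp b (k + 1) = v * bezT u n (k + 1) + u * s) →
      ∃ s, bezColp b k = v * bezT u n k + u * s := by
    rintro k ⟨s, hs⟩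
    refine ⟨X * s - C (v.coeff (k + 1)), ?_⟩
    have h2 : bezColp b k
        = X * bezColp b (k + 1) - u * C (v.coeff (k + 1)) + v * C (u.coeff (k + 1)) := by
      linear_combination hidS k
    rw [h2, hs, bezT_rec hun k]
    ring
  have hall : ∀ k, ∃ s, bezColp b k = v * bezT u n k + u * s := by
    have aux : ∀ d k, n ≤ k + d → ∃ s, bezColp b k = v * bezT u n k + u * s := by
      intro d
      induction d with
      | zero => intro k hk; exact hbase k (by omega)
      | succ d ih =>
        intro k hk
        rcases le_or_gt n k with h | h
        · exact hbase k h
        · exact hstep k (ih (k + 1) (by omega))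
    intro k
    exact aux n k (by omega)
  choose s hs using hall
  -- translating mulVec to polynomial sums
  have hsum : ∀ w : Fin n → F, ∑ j : Fin n, C (w j) * bezColp b (j : ℕ)
      = ∑ i : Fin n, C (b.mulVec w i) * X ^ (i : ℕ) := by
    intro w
    have h1 : ∀ j : Fin n, bezColp b (j : ℕ) = ∑ i : Fin n, C (b i j) * X ^ (i : ℕ) := by
      intro j
      rw [bezColp, dif_pos j.isLt, bezColf]
    simp only [h1, Finset.mul_sum, Matrix.mulVec, dotProduct]
    rw [Finset.sum_comm]
    refine Finset.sum_congr rfl fun i _ => ?_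
    rw [map_sum, Finset.sum_mul]
    refine Finset.sum_congr rfl fun j _ => ?_
    simp only [C_mul]
    ring
  have hdecomp : ∀ w : Fin n → F, ∑ j : Fin n, C (w j) * bezColp b (j : ℕ)
      = v * bezP u w + u * ∑ j : Fin n, C (w j) * s (j : ℕ) := by
    intro w
    rw [bezP, Finset.mul_sum, Finset.mul_sum, ← Finset.sum_add_distrib]
    refine Finset.sum_congr rfl fun j _ => ?_
    rw [hs (j : ℕ)]
    ring
  -- kernel characterization
  have hker : ∀ w : Fin n → F, b.mulVec w = 0 ↔ u ∣ v * bezP u w := by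
    intro w
    have hPzero : (∑ j : Fin n, C (w j) * bezColp b (j : ℕ) = 0) ↔ b.mulVec w = 0 := by
      rw [hsum w]
      constructor
      · intro h
        funext i
        have hc := congrArg (fun p => p.coeff (i : ℕ)) h
        simp only [coeff_zero] at hc
        rw [bez_coeff_sum_C_mul_X_pow, dif_pos i.isLt] at hc
        simpa using hc
      · intro h
        rw [h]
        simp
    constructor
    · intro h
      have h2 := (hdecomp w).symm.trans (hPzero.mpr h)
      exact ⟨-(∑ j : Fin n, C (w j) * s (j : ℕ)), by linear_combination h2⟩
    · rintro ⟨c, hc⟩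
      apply hPzero.mp
      have hdeg : (∑ j : Fin n, C (w j) * bezColp b (j : ℕ)).degree < u.degree := by
        rw [hsum w, hu, degree_lt_iff_coeff_zero]
        intro m hm
        rw [bez_coeff_sum_C_mul_X_pow, dif_neg (by omega)]
      have hdvd2 : u ∣ ∑ j : Fin n, C (w j) * bezColp b (j : ℕ) := by
        rw [hdecomp w, hc]
        exact ⟨c + ∑ j : Fin n, C (w j) * s (j : ℕ), by ring⟩
      exact eq_zero_of_dvd_of_degree_lt hdvd2 hdeg
  -- the linear map w ↦ coefficients of bezP u w, and its bijectivity
  let L : (Fin n → F) →ₗ[F] (Fin n → F) :=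
    { toFun := fun w i => (bezP u w).coeff (i : ℕ)
      map_add' := by
        intro w w'
        have h : bezP u (w + w') = bezP u w + bezP u w' := by
          simp [bezP, C_add, add_mul, Finset.sum_add_distrib]
        funext i
        simp [h]
      map_smul' := by
        intro c w
        have h : bezP u (c • w) = C c * bezP u w := by
          simp [bezP, C_mul, mul_assoc, Finset.mul_sum, smul_eq_mul]
        funext i
        simp [h, coeff_C_mul, smul_eq_mul] }
  have hLinj : Function.Injective L := by
    rw [injective_iff_map_eq_zero]
    intro w hw
    by_contra hw0
    refine bezP_ne_zero hun hu0 hw0 ?_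
    ext m
    rcases lt_or_ge m n with hm | hm
    · have := congrFun hw ⟨m, hm⟩
      simpa [L] using this
    · rw [(degree_lt_iff_coeff_zero _ n).mp (bezP_degree_lt u w) m hm, coeff_zero]
  have hLsurj : Function.Surjective L := LinearMap.injective_iff_surjective.mp hLinj
  constructor
  · -- det unit → coprime
    intro hdet
    by_contra hnc
    have hg : ¬ IsUnit (EuclideanDomain.gcd u v) := fun h => hnc (EuclideanDomain.gcd_isUnit_iff.mp h)
    obtain ⟨p, hp⟩ := EuclideanDomain.gcd_dvd_left u v
    obtain ⟨q, hq⟩ := EuclideanDomain.gcd_dvd_right u v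
    set g := EuclideanDomain.gcd u v with hgdef
    have hg0 : g ≠ 0 := fun h => hu0 (by rw [hp, h, zero_mul])
    have hp0 : p ≠ 0 := fun h => hu0 (by rw [hp, h, mul_zero])
    have hgd : 1 ≤ g.natDegree := by
      by_contra h
      push_neg at h
      refine hg (isUnit_iff_degree_eq_zero.mpr ?_)
      rw [degree_eq_natDegree hg0, show g.natDegree = 0 by omega]
      rfl
    have hpd : p.degree < (n : WithBot ℕ) := by
      have hnd : g.natDegree + p.natDegree = n := by
        rw [← hun, hp, natDegree_mul hg0 hp0]
      rw [degree_eq_natDegree hp0]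
      exact_mod_cast (by omega : p.natDegree < n)
    have hdvd : u ∣ v * p := ⟨q, by rw [hq, hp]; ring⟩
    obtain ⟨w, hw⟩ := hLsurj (fun i => p.coeff (i : ℕ))
    have hpw : bezP u w = p := by
      ext m
      rcases lt_or_ge m n with hm | hm
      · have := congrFun hw ⟨m, hm⟩
        simpa [L] using this
      · rw [(degree_lt_iff_coeff_zero _ n).mp (bezP_degree_lt u w) m hm,
          (degree_lt_iff_coeff_zero _ n).mp hpd m hm]
    have hw0 : w ≠ 0 := by
      rintro rfl
      exact hp0 (by rw [← hpw]; simp [bezP])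
    have hmv : b.mulVec w = 0 := (hker w).mpr (by rw [hpw]; exact hdvd)
    have hdet0 : b.det = 0 := Matrix.exists_mulVec_eq_zero_iff.mp ⟨w, hw0, hmv⟩
    rw [hdet0] at hdet
    exact zero_ne_one (isUnit_zero_iff.mp hdet)
  · -- coprime → det unit
    intro hcop
    rw [isUnit_iff_ne_zero]
    intro hdet0
    obtain ⟨w, hw0, hwv⟩ := Matrix.exists_mulVec_eq_zero_iff.mpr hdet0
    have hdvd := (hker w).mp hwv
    have hdvd2 : u ∣ bezP u w := hcop.dvd_of_dvd_mul_left hdvd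
    have hz : bezP u w = 0 :=
      eq_zero_of_dvd_of_degree_lt hdvd2 (by rw [hu]; exact bezP_degree_lt u w)
    exact bezP_ne_zero hun hu0 hw0 hz
end

section
/- For any pair (u,v) over a field F with u monic of degree n, deg v < n, and u, v coprime, the n×n Hankel matrix H_n(u,v) (with entries from the Laurent expansion of v/u at infinity) is nonsingular. -/
/-!
Let `φ p` be the expansion of a polynomial `p` at infinity, i.e. `p` evaluated at `X⁻¹` in
`F⸨X⸩`; it has no terms of positive degree and has order `-natDegree p`. With
`x = ∑ₖ aₖ X^(k+1)` we have `φ v = φ u * x`, and for `q = ∑ⱼ cⱼ Xʲ` the vector `H c` lists the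
coefficients of `X¹, …, Xⁿ` in `x * φ q`. So if `H c = 0`, divide `v q = u p + r`: then
`φ r = φ u * (x * φ q - φ p)`, and if `r ≠ 0` the second factor would have order
`n - natDegree r ∈ [1, n]`, where all its coefficients vanish. Hence `u ∣ v q`, so `u ∣ q` by
coprimality, and `q = 0` because `deg q < n`.
-/

open Polynomial

section ExpansionAtInfinity

variable {F : Type*} [Field F]

local notation "φ" =>
  Polynomial.aeval (R := F) ((PowerSeries.X : PowerSeries F) : LaurentSeries F)⁻¹

theorem aeval_X_inv_eq_sum {p : F[X]} {N : ℕ} (hp : p.natDegree < N) :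
    φ p = ∑ i ∈ Finset.range N, HahnSeries.single (-(i : ℤ)) (p.coeff i) := by
  rw [aeval_def, eval₂_eq_sum_range' _ hp, PowerSeries.coe_X, HahnSeries.inv_single, inv_one]
  refine Finset.sum_congr rfl fun i _ => ?_
  rw [HahnSeries.algebraMap_apply', HahnSeries.single_pow]
  simp [HahnSeries.single_mul_single]

theorem coeff_mul_aeval_X_inv {p : F[X]} {N : ℕ} (hp : p.natDegree < N) (x : LaurentSeries F)
    (m : ℤ) : (x * φ p).coeff m = ∑ i ∈ Finset.range N, x.coeff (m + i) * p.coeff i := by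
  rw [aeval_X_inv_eq_sum hp, Finset.mul_sum, HahnSeries.coeff_sum]
  simp [HahnSeries.coeff_mul_single]

theorem coeff_aeval_X_inv_neg (p : F[X]) (k : ℕ) : (φ p).coeff (-k) = p.coeff k := by
  rw [aeval_X_inv_eq_sum (N := max p.natDegree k + 1) (by omega), HahnSeries.coeff_sum]
  simp [HahnSeries.coeff_single]

theorem coeff_aeval_X_inv_of_pos (p : F[X]) {m : ℤ} (hm : 0 < m) : (φ p).coeff m = 0 := by
  rw [aeval_X_inv_eq_sum (Nat.lt_succ_self p.natDegree), HahnSeries.coeff_sum]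
  refine Finset.sum_eq_zero fun i _ => ?_
  rw [HahnSeries.coeff_single, if_neg (by omega)]

theorem aeval_X_inv_injective : Function.Injective φ :=
  (injective_iff_map_eq_zero _).mpr fun p hp => Polynomial.ext fun k => by
    rw [← coeff_aeval_X_inv_neg, hp, HahnSeries.coeff_zero, coeff_zero]

theorem order_aeval_X_inv (p : F[X]) : (φ p).order = -p.natDegree := by
  rcases eq_or_ne p 0 with rfl | hp
  · simp
  have hφp : φ p ≠ 0 := (map_ne_zero_iff _ aeval_X_inv_injective).mpr hp
  refine le_antisymm (HahnSeries.order_le_of_coeff_ne_zero ?_)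
    ((HahnSeries.le_order_iff_forall hφp).mpr fun j hj => ?_)
  · rwa [coeff_aeval_X_inv_neg, coeff_natDegree, leadingCoeff_ne_zero]
  · obtain ⟨k, rfl⟩ : ∃ k : ℕ, j = -k := ⟨(-j).toNat, by omega⟩
    rw [coeff_aeval_X_inv_neg, coeff_eq_zero_of_natDegree_lt (by omega)]

theorem dvd_mul_of_coeff_mul_aeval_X_inv_eq_zero {u v q : F[X]} (hu : u.Monic)
    {x : LaurentSeries F} (hx : φ v = φ u * x)
    (hq : ∀ m : ℤ, 0 < m → m ≤ u.natDegree → (x * φ q).coeff m = 0) : u ∣ v * q := by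
  rw [← modByMonic_eq_zero_iff_dvd hu]
  set r := v * q %ₘ u
  set e := x * φ q - φ (v * q /ₘ u)
  by_contra hr
  have hre : φ r = φ u * e := by
    have hdiv : r = v * q - u * (v * q /ₘ u) := eq_sub_of_add_eq (modByMonic_add_div _ _)
    rw [hdiv, map_sub, map_mul, map_mul, hx]
    ring
  have he : e ≠ 0 := by
    rintro he
    rw [he, mul_zero, map_eq_zero_iff _ aeval_X_inv_injective] at hre
    exact hr hre
  have hφu : φ u ≠ 0 := (map_ne_zero_iff _ aeval_X_inv_injective).mpr hu.ne_zero
  have hr_lt : r.natDegree < u.natDegree := natDegree_lt_natDegree hr (degree_modByMonic_lt _ hu)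
  have horder := congrArg HahnSeries.order hre
  rw [HahnSeries.order_mul hφu he, order_aeval_X_inv, order_aeval_X_inv] at horder
  apply mt HahnSeries.coeff_order_eq_zero.mp he
  rw [HahnSeries.coeff_sub, hq _ (by omega) (by omega), coeff_aeval_X_inv_of_pos _ (by omega),
    sub_zero]

theorem hankel_mulVec_eq_coeff {a : ℕ → F} {n : ℕ} {q : F[X]} (hq : q.natDegree < n)
    (i : Fin n) :
    (Matrix.of fun i j : Fin n => a (i + j)).mulVec (fun j : Fin n => q.coeff j) i
      = (((PowerSeries.X * PowerSeries.mk a : PowerSeries F) : LaurentSeries F) * φ q).coeff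
          (i + 1) := by
  simp only [Matrix.mulVec, dotProduct, Matrix.of_apply]
  rw [Fin.sum_univ_eq_sum_range (fun j => a (i + j) * q.coeff j), coeff_mul_aeval_X_inv hq]
  refine Finset.sum_congr rfl fun j _ => ?_
  rw [show (i : ℤ) + 1 + j = ((i + j + 1 : ℕ) : ℤ) by push_cast; ring,
    HahnSeries.ofPowerSeries_apply_coeff, PowerSeries.coeff_succ_X_mul, PowerSeries.coeff_mk]

end ExpansionAtInfinity

theorem hankel_of_hermite_pair_nonsingular_general (F : Type*) [Field F] (n : ℕ)
    (u v : F[X]) (hu : u.Monic) (hun : u.natDegree = n)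
    (hcop : IsCoprime u v) (a : ℕ → F)
    (ha : Polynomial.aeval (((PowerSeries.X : PowerSeries F) : LaurentSeries F)⁻¹) v
        = Polynomial.aeval (((PowerSeries.X : PowerSeries F) : LaurentSeries F)⁻¹) u
            * ((PowerSeries.X * PowerSeries.mk a : PowerSeries F) : LaurentSeries F)) :
    IsUnit (Matrix.of fun i j : Fin n => a ((i : ℕ) + (j : ℕ))).det := by
  rw [isUnit_iff_ne_zero, Ne, ← Matrix.exists_mulVec_eq_zero_iff]
  rintro ⟨c, hc, hHc⟩
  set q : F[X] := ((degreeLTEquiv F n).symm c : F[X])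
  have hcq : c = fun j : Fin n => q.coeff j := ((degreeLTEquiv F n).apply_symm_apply c).symm
  have hq0 : q ≠ 0 := by
    rintro hq
    exact hc (by ext j; simp [hcq, hq])
  have hqn : q.natDegree < n :=
    (natDegree_lt_iff_degree_lt hq0).mpr (mem_degreeLT.mp ((degreeLTEquiv F n).symm c).2)
  have hdvd : u ∣ v * q := by
    refine dvd_mul_of_coeff_mul_aeval_X_inv_eq_zero hu ha fun m hm hmn => ?_
    obtain ⟨i, rfl⟩ : ∃ i : ℕ, m = i + 1 := ⟨(m - 1).toNat, by omega⟩
    rw [← hankel_mulVec_eq_coeff hqn ⟨i, by omega⟩, ← hcq, hHc, Pi.zero_apply]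
  exact hq0 (eq_zero_of_dvd_of_natDegree_lt (hcop.dvd_of_dvd_mul_left hdvd) (hun ▸ hqn))

/-- For a Hermite pair `(u, v)` (`u` monic of degree `n`, `deg v < n`, `u, v` coprime),
the `n × n` Hankel matrix `H_n(u,v)`, whose `(i,j)` entry is `a_{i+j-1}` (1-based; here
`a k` stands for `a_{k+1}`) where `v(X)/u(X) = ∑_{i≥1} a_i X^{-i}` is the Laurent
expansion at infinity (below written with `t = X⁻¹` in `F((t))`), is nonsingular. -/
theorem hankel_of_hermite_pair_nonsingular (F : Type*) [Field F] (n : ℕ) (hn : 1 ≤ n)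
    (u v : F[X]) (hu : u.Monic) (hun : u.natDegree = n) (hv : v.degree < n)
    (hcop : IsCoprime u v) (a : ℕ → F)
    (ha : Polynomial.aeval (((PowerSeries.X : PowerSeries F) : LaurentSeries F)⁻¹) v
        = Polynomial.aeval (((PowerSeries.X : PowerSeries F) : LaurentSeries F)⁻¹) u
            * ((PowerSeries.X * PowerSeries.mk a : PowerSeries F) : LaurentSeries F)) :
    IsUnit (Matrix.of fun i j : Fin n => a ((i : ℕ) + (j : ℕ))).det :=
  hankel_of_hermite_pair_nonsingular_general F n u v hu hun hcop a ha
end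

section
/- An n×n Hankel matrix A = (a_{i+j-1}) over a field F has all leading principal minors zero (i.e., A_d is singular for d = 1,...,n) if and only if a_1 = a_2 = ... = a_n = 0. Moreover, for 0 ≤ r ≤ n-1, A has all leading principal minors zero and rank(A) ≤ r if and only if a_1 = ... = a_{2n-r-1} = 0. -/
open Matrix

lemma antitri_det_zero {F : Type*} [Field F] {d : ℕ} (hd : 1 ≤ d)
    (B : Matrix (Fin d) (Fin d) F)
    (h : ∀ i j : Fin d, (i : ℕ) + (j : ℕ) + 1 ≤ d → B i j = 0) : B.det = 0 := by
  rw [Matrix.det_apply]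
  refine Finset.sum_eq_zero fun σ _ => ?_
  have : ∃ i : Fin d, ((σ i : ℕ) + (i : ℕ) + 1 ≤ d) := by
    by_contra hc
    push_neg at hc
    have hsum : ∀ i : Fin d, d ≤ (σ i : ℕ) + (i : ℕ) := fun i => by
      have := hc i; omega
    have h1 : (d : ℕ) * d ≤ ∑ i : Fin d, ((σ i : ℕ) + (i : ℕ)) := by
      calc (d : ℕ) * d = ∑ _i : Fin d, d := by simp [mul_comm]
        _ ≤ _ := Finset.sum_le_sum fun i _ => hsum i
    have h2 : ∑ i : Fin d, ((σ i : ℕ) + (i : ℕ)) = 2 * ∑ i : Fin d, (i : ℕ) := by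
      rw [Finset.sum_add_distrib, Equiv.sum_comp σ (fun i : Fin d => (i : ℕ))]
      ring
    have h4 : ∑ i : Fin d, (i : ℕ) = ∑ i ∈ Finset.range d, i :=
      Fin.sum_univ_eq_sum_range (fun i => i) d
    have h3 := Finset.sum_range_id_mul_two d
    have hdd : d * d ≤ d * (d - 1) := by omega
    have : d ≤ d - 1 := Nat.le_of_mul_le_mul_left hdd (by omega)
    omega
  obtain ⟨i, hi⟩ := this
  have hz := Finset.prod_eq_zero (f := fun j : Fin d => B (σ j) j)
    (Finset.mem_univ i) (h _ _ hi)
  rw [hz, smul_zero]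

lemma antitri_det_ne_zero {F : Type*} [Field F] {k : ℕ}
    (B : Matrix (Fin k) (Fin k) F)
    (h0 : ∀ i j : Fin k, (i : ℕ) + (j : ℕ) + 1 < k → B i j = 0)
    (hd : ∀ i j : Fin k, (i : ℕ) + (j : ℕ) + 1 = k → B i j ≠ 0) : B.det ≠ 0 := by
  set C : Matrix (Fin k) (Fin k) F := B.submatrix id Fin.rev with hC
  have hB : B = C.submatrix id ⇑(Fin.revPerm (n := k)) := by
    ext i j
    simp [hC, Matrix.submatrix_apply, Fin.rev_rev]
  have hCdet : C.det = ∏ i : Fin k, C i i := by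
    apply Matrix.det_of_lowerTriangular
    intro i j hij
    have hij' : (i : ℕ) < (j : ℕ) := hij
    show B i j.rev = 0
    apply h0
    have h1 := Fin.val_rev j
    have := j.isLt
    omega
  have hCne : C.det ≠ 0 := by
    rw [hCdet]
    apply Finset.prod_ne_zero_iff.2
    intro i _
    show B i i.rev ≠ 0
    apply hd
    have h1 := Fin.val_rev i
    have := i.isLt
    omega
  rw [hB, Matrix.det_permute']
  apply mul_ne_zero _ hCne
  rcases Int.units_eq_one_or (Equiv.Perm.sign (Fin.revPerm (n := k))) with hs | hs <;>
    simp [hs]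

lemma rank_submatrix_le' {F : Type*} [Field F] {k n : ℕ}
    (f g : Fin k → Fin n) (A : Matrix (Fin n) (Fin n) F) :
    (A.submatrix f g).rank ≤ A.rank := by
  classical
  set P : Matrix (Fin k) (Fin n) F := fun i t => if t = f i then 1 else 0 with hP
  set Q : Matrix (Fin n) (Fin k) F := fun t j => if t = g j then 1 else 0 with hQ
  have key : A.submatrix f g = P * A * Q := by
    ext i j
    rw [Matrix.mul_apply]
    have h1 : ∀ t : Fin n, (P * A) i t = A (f i) t := by
      intro t
      rw [Matrix.mul_apply]
      simp [hP, ite_mul, Finset.sum_ite_eq]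
    simp only [h1, hQ, mul_ite, mul_one, mul_zero]
    simp [Finset.sum_ite_eq]
  rw [key]
  exact le_trans (Matrix.rank_mul_le_left _ _) (Matrix.rank_mul_le_right _ _)

/-- For an `n × n` Hankel matrix `A` with `(i,j)` entry `a_{i+j-1}` (1-based), all leading
principal submatrices `A_d` (`1 ≤ d ≤ n`) are singular iff `a_1 = ... = a_n = 0`;
moreover, for `0 ≤ r ≤ n - 1`, all `A_d` are singular and `rank A ≤ r` iff
`a_1 = ... = a_{2n-r-1} = 0`. -/
theorem hankel_leading_minors_zero_iff (F : Type*) [Field F] (n : ℕ) (hn : 1 ≤ n)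
    (a : ℕ → F) (A : Matrix (Fin n) (Fin n) F)
    (hA : ∀ i j : Fin n, A i j = a ((i : ℕ) + (j : ℕ) + 1)) :
    ((∀ (d : ℕ) (hd : d ≤ n), 1 ≤ d →
        (A.submatrix (Fin.castLE hd) (Fin.castLE hd)).det = 0)
      ↔ ∀ i : ℕ, 1 ≤ i → i ≤ n → a i = 0) ∧
    (∀ r : ℕ, r ≤ n - 1 →
      (((∀ (d : ℕ) (hd : d ≤ n), 1 ≤ d →
          (A.submatrix (Fin.castLE hd) (Fin.castLE hd)).det = 0) ∧ A.rank ≤ r)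
        ↔ ∀ i : ℕ, 1 ≤ i → i ≤ 2 * n - r - 1 → a i = 0)) := by
  classical
  have fwd1 : (∀ (d : ℕ) (hd : d ≤ n), 1 ≤ d →
      (A.submatrix (Fin.castLE hd) (Fin.castLE hd)).det = 0) →
      ∀ i : ℕ, 1 ≤ i → i ≤ n → a i = 0 := by
    intro hm i
    induction i using Nat.strong_induction_on with
    | _ i ih =>
      intro h1 h2
      by_contra hne
      refine antitri_det_ne_zero (A.submatrix (Fin.castLE h2) (Fin.castLE h2))
        ?_ ?_ (hm i h2 h1)
      · intro p q hpq
        simp only [Matrix.submatrix_apply, hA, Fin.coe_castLE]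
        exact ih _ hpq (by omega) (by omega)
      · intro p q hpq
        simp only [Matrix.submatrix_apply, hA, Fin.coe_castLE]
        rw [hpq]
        exact hne
  have bwd1 : (∀ i : ℕ, 1 ≤ i → i ≤ n → a i = 0) →
      ∀ (d : ℕ) (hd : d ≤ n), 1 ≤ d →
      (A.submatrix (Fin.castLE hd) (Fin.castLE hd)).det = 0 := by
    intro hz d hd h1
    apply antitri_det_zero h1
    intro p q hpq
    simp only [Matrix.submatrix_apply, hA, Fin.coe_castLE]
    exact hz _ (by omega) (by omega)
  refine ⟨⟨fwd1, bwd1⟩, ?_⟩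
  intro r hr
  constructor
  · rintro ⟨hm, hrank⟩
    have hzn := fwd1 hm
    intro i
    induction i using Nat.strong_induction_on with
    | _ i ih =>
      intro h1 h2
      by_cases hin : i ≤ n
      · exact hzn i h1 hin
      · push_neg at hin
        by_contra hne
        have hk1 : r + 1 ≤ 2 * n - i := by omega
        have hf : ∀ p : Fin (2 * n - i), i - n + (p : ℕ) < n := fun p => by
          have := p.isLt; omega
        set f : Fin (2 * n - i) → Fin n := fun p => ⟨i - n + p, hf p⟩ with hfdef
        have hdet : (A.submatrix f f).det ≠ 0 := by
          apply antitri_det_ne_zero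
          · intro p q hpq
            simp only [Matrix.submatrix_apply, hA, hfdef]
            exact ih _ (by omega) (by omega) (by omega)
          · intro p q hpq
            simp only [Matrix.submatrix_apply, hA, hfdef]
            have heq : i - n + (p : ℕ) + (i - n + (q : ℕ)) + 1 = i := by omega
            rw [heq]
            exact hne
        have hunit : IsUnit (A.submatrix f f) :=
          (Matrix.isUnit_iff_isUnit_det _).2 (isUnit_iff_ne_zero.2 hdet)
        have hrk : (A.submatrix f f).rank = 2 * n - i := by
          rw [Matrix.rank_of_isUnit _ hunit, Fintype.card_fin]
        have hle := rank_submatrix_le' f f A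
        omega
  · intro hz
    have hn2 : ∀ i : ℕ, 1 ≤ i → i ≤ n → a i = 0 := fun i h1 h2 => hz i h1 (by omega)
    refine ⟨bwd1 hn2, ?_⟩
    have hg : ∀ p : Fin r, n - r + (p : ℕ) < n := fun p => by
      have := p.isLt; omega
    set B : Matrix (Fin r) (Fin n) F :=
      A.submatrix (fun p => ⟨n - r + p, hg p⟩) id with hBdef
    set P : Matrix (Fin n) (Fin r) F :=
      fun i p => if (i : ℕ) = n - r + (p : ℕ) then 1 else 0 with hPdef
    have key : A = P * B := by
      ext i j
      rw [Matrix.mul_apply]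
      by_cases hi : n - r ≤ (i : ℕ)
      · have hlt : (i : ℕ) - (n - r) < r := by have := i.isLt; omega
        have hs : ∑ p : Fin r, P i p * B p j =
            P i ⟨(i : ℕ) - (n - r), hlt⟩ * B ⟨(i : ℕ) - (n - r), hlt⟩ j := by
          refine Finset.sum_eq_single _ (fun b _ hb => ?_) (fun h => absurd (Finset.mem_univ _) h)
          have hbv : (i : ℕ) ≠ n - r + (b : ℕ) := by
            intro hc
            apply hb
            apply Fin.ext
            show (b : ℕ) = (i : ℕ) - (n - r)
            omega
          simp only [hPdef]
          rw [if_neg hbv, zero_mul]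
        rw [hs]
        have hP1 : P i ⟨(i : ℕ) - (n - r), hlt⟩ = 1 := by
          simp only [hPdef]
          rw [if_pos]
          show (i : ℕ) = n - r + ((i : ℕ) - (n - r))
          omega
        rw [hP1, one_mul]
        simp only [hBdef, Matrix.submatrix_apply, id_eq]
        congr 1
        apply Fin.ext
        show (i : ℕ) = n - r + ((i : ℕ) - (n - r))
        omega
      · push_neg at hi
        rw [hA, hz _ (by omega) (by have := i.isLt; have := j.isLt; omega)]
        symm
        refine Finset.sum_eq_zero fun p _ => ?_
        simp only [hPdef]
        rw [if_neg (by have := p.isLt; omega), zero_mul]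
    calc A.rank = (P * B).rank := by rw [← key]
      _ ≤ B.rank := Matrix.rank_mul_le_right _ _
      _ ≤ Fintype.card (Fin r) := Matrix.rank_le_card_height _
      _ = r := Fintype.card_fin r
end

section
/- For 1 ≤ k ≤ n, the number of n×n Hankel matrices A over F_q such that the k-th leading principal submatrix A_k is nonsingular and A_d is singular for all k < d ≤ n equals q^(n+k-2)(q-1). For k = 0 (all leading principal submatrices singular) the count is q^(n-1). -/
set_option linter.unusedSectionVars false
set_option maxHeartbeats 1000000

open Matrix Finset

section HankelAux

variable {F : Type*} [Field F]

/-- The `d × d` Hankel matrix of a sequence (0-indexed). -/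
def hmat (a : ℕ → F) (d : ℕ) : Matrix (Fin d) (Fin d) F :=
  Matrix.of fun i j => a ((i : ℕ) + (j : ℕ))

lemma hmat_congr {a b : ℕ → F} {d : ℕ} (h : ∀ t, t < 2 * d - 1 → a t = b t) :
    hmat a d = hmat b d := by
  ext i j
  exact h _ (by omega)

/-- Anti-triangular determinant criterion. -/
lemma hmat_det_eq_zero_iff {b : ℕ → F} {D : ℕ} (hD : 1 ≤ D)
    (h : ∀ u, u < D - 1 → b u = 0) :
    (hmat b D).det = 0 ↔ b (D - 1) = 0 := by
  classical
  set σ : Equiv.Perm (Fin D) := Fin.revPerm with hσ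
  have hM' : ((hmat b D).submatrix id σ).det = b (D - 1) ^ D := by
    have htri : ((hmat b D).submatrix id σ).BlockTriangular OrderDual.toDual := by
      intro i j hij
      have hij' : (i : ℕ) < (j : ℕ) := hij
      have : (i : ℕ) + (σ j : ℕ) < D - 1 := by
        have := Fin.val_rev j
        simp only [hσ, Fin.revPerm_apply]
        omega
      simpa [hmat] using h _ this
    rw [Matrix.det_of_lowerTriangular _ htri]
    have : ∀ i : Fin D, ((hmat b D).submatrix id σ) i i = b (D - 1) := by
      intro i
      have := Fin.val_rev i
      have hi := i.isLt
      simp only [hσ, Matrix.submatrix_apply, id_eq, Fin.revPerm_apply, hmat, Matrix.of_apply]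
      congr 1
      omega
    rw [Finset.prod_congr rfl fun i _ => this i]
    simp
  have hsign : ((Equiv.Perm.sign σ : ℤ) : F) ≠ 0 := by
    rcases Int.units_eq_one_or (Equiv.Perm.sign σ) with h1 | h1 <;> simp [h1]
  rw [Matrix.det_permute' σ (hmat b D)] at hM'
  constructor
  · intro h0
    have : b (D - 1) ^ D = 0 := by rw [← hM', h0, mul_zero]
    have := pow_eq_zero_iff (n := D) (by omega) |>.mp this
    exact this
  · intro h0
    have : ((Equiv.Perm.sign σ : ℤ) : F) * (hmat b D).det = 0 := by
      rw [hM', h0, zero_pow (by omega)]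
    rcases mul_eq_zero.mp this with h1 | h1
    · exact absurd h1 hsign
    · exact h1

/-- Lemma A : all leading principal Hankel minors up to size `N` vanish iff the first `N`
terms of the sequence vanish. -/
lemma hmat_all_det_zero_iff {a : ℕ → F} {N : ℕ} :
    (∀ d, 1 ≤ d → d ≤ N → (hmat a d).det = 0) ↔ (∀ t, t < N → a t = 0) := by
  constructor
  · intro H t
    induction t using Nat.strong_induction_on with
    | _ t ih =>
      intro htN
      have := hmat_det_eq_zero_iff (b := a) (D := t + 1) (by omega)
        (fun u hu => ih u (by omega) (by omega))
      simpa using this.mp (H (t + 1) (by omega) (by omega))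
  · intro H d hd1 hdN
    refine (hmat_det_eq_zero_iff hd1 fun u hu => H u (by omega)).mpr (H _ (by omega))

/-- the test vector `(-c₀, …, -c_{k-1}, 1, 0, …)` as a function on `ℕ`. -/
def vv (k : ℕ) (c : Fin k → F) : ℕ → F := fun j =>
  if h : j < k then -c ⟨j, h⟩ else if j = k then 1 else 0

lemma sum_vv {k d : ℕ} (hkd : k < d) (φ : ℕ → F) (c : Fin k → F) : ∑ j : Fin d, φ j * vv k c j = φ k - ∑ m : Fin k, φ m * c m := by
  have h1 : ∑ j : Fin d, φ (j : ℕ) * vv k c (j : ℕ)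
      = ∑ j ∈ range d, φ j * vv k c j := Fin.sum_univ_eq_sum_range (fun j => φ j * vv k c j) d
  rw [h1]
  have h2 : ∑ j ∈ range (k+1), φ j * vv k c j = ∑ j ∈ range d, φ j * vv k c j := by
    apply Finset.sum_subset
    · intro x hx; simp only [mem_range] at *; omega
    · intro x _ hx
      simp only [mem_range, not_lt] at hx
      have : vv (F := F) k c x = 0 := by
        unfold vv
        rw [dif_neg (by omega), if_neg (by omega)]
      rw [this, mul_zero]
  rw [← h2, Finset.sum_range_succ]
  have h3 : vv (F := F) k c k = 1 := by
    unfold vv; rw [dif_neg (by omega), if_pos rfl]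
  rw [h3, mul_one]
  have h4 : ∑ j ∈ range k, φ j * vv k c j = ∑ j : Fin k, φ (j : ℕ) * vv k c (j : ℕ) :=
    (Fin.sum_univ_eq_sum_range (fun j => φ j * vv k c j) k).symm
  rw [h4]
  have h5 : ∀ j : Fin k, φ (j : ℕ) * vv k c (j : ℕ) = -(φ (j : ℕ) * c j) := by
    intro j
    unfold vv
    rw [dif_pos j.isLt]
    simp
  rw [Finset.sum_congr rfl fun j _ => h5 j]
  simp [sub_eq_add_neg]
  ring

/-- If the sequence satisfies a linear recurrence of order `k` on `[k, d+k)`,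
the `d × d` Hankel determinant vanishes (for `d > k`). -/
lemma det_zero_of_rec {a : ℕ → F} {k d : ℕ} (hkd : k < d) (c : Fin k → F)
    (hrec : ∀ t, k ≤ t → t < d + k → a t = ∑ m : Fin k, c m * a (t - k + m)) :
    (hmat a d).det = 0 := by
  rw [← Matrix.exists_mulVec_eq_zero_iff]
  refine ⟨fun j : Fin d => vv k c j, ?_, ?_⟩
  · intro h0
    have := congrFun h0 ⟨k, hkd⟩
    simp only [Pi.zero_apply] at this
    unfold vv at this
    rw [dif_neg (by omega), if_pos rfl] at this
    exact one_ne_zero this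
  · funext i
    show ∑ j : Fin d, a ((i : ℕ) + (j : ℕ)) * vv k c (j : ℕ) = 0
    have hs : ∑ j : Fin d, a ((i : ℕ) + (j : ℕ)) * vv k c (j : ℕ)
        = a ((i : ℕ) + k) - ∑ m : Fin k, a ((i : ℕ) + (m : ℕ)) * c m := by
      simpa using sum_vv hkd (fun t => a ((i : ℕ) + t)) c
      
    rw [hs]
    have hr := hrec ((i : ℕ) + k) (by omega) (by omega)
    have : ∀ m : Fin k, a ((i : ℕ) + k - k + (m : ℕ)) = a ((i : ℕ) + (m : ℕ)) := by
      intro m; congr 1; omega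
    rw [Finset.sum_congr rfl (fun m _ => by rw [this m])] at hr
    rw [hr]
    rw [Finset.sum_congr rfl (fun m (_ : m ∈ univ) => mul_comm (c m) (a ((i : ℕ) + (m : ℕ))))]
    exact sub_self _

/-- Key step: if the recurrence has held so far (from `k` up to `t`), `A_k` is nonsingular
and `A_{t+1-k}` is singular, the recurrence holds at `t` as well. -/
lemma rec_step {a : ℕ → F} {k t : ℕ} (ht : 2 * k ≤ t) (c : Fin k → F)
    (hdetk : (hmat a k).det ≠ 0)
    (hprev : ∀ s, k ≤ s → s < t → a s = ∑ m : Fin k, c m * a (s - k + m))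
    (hdet : (hmat a (t + 1 - k)).det = 0) :
    a t = ∑ m : Fin k, c m * a (t - k + m) := by
  classical
  set d := t + 1 - k with hd
  have hkd : k < d := by omega
  by_contra hne
  set ε : ℕ → F := fun s => a s - ∑ m : Fin k, c m * a (s - k + m) with hε
  have hεprev : ∀ s, k ≤ s → s < t → ε s = 0 := fun s h1 h2 => by
    simp [hε, hprev s h1 h2]
  have hεt : ε t ≠ 0 := sub_ne_zero.mpr hne
  obtain ⟨v, hv0, hmv⟩ := (Matrix.exists_mulVec_eq_zero_iff).mpr hdet
  have hrow : ∀ i : Fin d, ∑ j : Fin d, a ((i : ℕ) + (j : ℕ)) * v j = 0 := by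
    intro i
    have := congrFun hmv i
    simpa [Matrix.mulVec, dotProduct, hmat] using this
  -- derived rows
  have hrowε : ∀ i : Fin d, k ≤ (i : ℕ) → ∑ j : Fin d, ε ((i : ℕ) + (j : ℕ)) * v j = 0 := by
    intro i hik
    have expand : ∀ j : Fin d, ε ((i : ℕ) + (j : ℕ)) * v j
        = a ((i : ℕ) + (j : ℕ)) * v j
          - ∑ m : Fin k, c m * (a (((i : ℕ) - k + (m : ℕ)) + (j : ℕ)) * v j) := by
      intro j
      simp only [hε]
      rw [sub_mul, Finset.sum_mul]
      congr 1
      refine Finset.sum_congr rfl fun m _ => ?_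
      rw [mul_assoc]
      congr 3
      omega
    rw [Finset.sum_congr rfl fun j _ => expand j]
    rw [Finset.sum_sub_distrib]
    rw [hrow i]
    rw [Finset.sum_comm]
    have : ∀ m : Fin k, ∑ j : Fin d, c m * (a (((i : ℕ) - k + (m : ℕ)) + (j : ℕ)) * v j) = 0 := by
      intro m
      rw [← Finset.mul_sum]
      have hlt : (i : ℕ) - k + (m : ℕ) < d := by omega
      have := hrow ⟨(i : ℕ) - k + (m : ℕ), hlt⟩
      simp only at this
      rw [this, mul_zero]
    rw [Finset.sum_congr rfl fun m _ => this m]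
    simp
  -- tail coordinates vanish
  have hvtail : ∀ p : ℕ, ∀ j : Fin d, d - 1 - (j : ℕ) = p → k ≤ (j : ℕ) → v j = 0 := by
    intro p
    induction p using Nat.strong_induction_on with
    | _ p ih =>
      intro j hjp hjk
      have hjd : (j : ℕ) < d := j.isLt
      have hi : k + (d - 1 - (j : ℕ)) < d := by omega
      set i : Fin d := ⟨k + (d - 1 - (j : ℕ)), hi⟩ with hidef
      have hsum := hrowε i (by simp [hidef])
      have hij : (i : ℕ) + (j : ℕ) = t := by simp [hidef]; omega
      have hsingle : ∑ j' : Fin d, ε ((i : ℕ) + (j' : ℕ)) * v j' = ε t * v j := by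
        rw [← hij]
        apply Finset.sum_eq_single
        · intro j' _ hne'
          rcases lt_or_gt_of_ne (fun h => hne' (Fin.ext h) : (j' : ℕ) ≠ (j : ℕ)) with hlt | hgt
          · have : ε ((i : ℕ) + (j' : ℕ)) = 0 :=
              hεprev _ (by simp [hidef]; omega) (by omega)
            rw [this, zero_mul]
          · have : v j' = 0 := ih (d - 1 - (j' : ℕ)) (by omega) j' rfl (by omega)
            rw [this, mul_zero]
        · intro h; exact absurd (Finset.mem_univ j) h
      rw [hsingle] at hsum
      exact (mul_eq_zero.mp hsum).resolve_left hεt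
  have hvtail' : ∀ j : Fin d, k ≤ (j : ℕ) → v j = 0 := fun j hj => hvtail _ j rfl hj
  -- head coordinates vanish
  set w : Fin k → F := fun i => v ⟨(i : ℕ), lt_trans i.isLt hkd⟩ with hw
  have hwmv : (hmat a k).mulVec w = 0 := by
    funext i
    show ∑ m : Fin k, a ((i : ℕ) + (m : ℕ)) * w m = 0
    set f : ℕ → F := fun j => if h : j < d then a ((i : ℕ) + j) * v ⟨j, h⟩ else 0 with hf
    have e1 : ∑ m : Fin k, a ((i : ℕ) + (m : ℕ)) * w m = ∑ m : Fin k, f (m : ℕ) := by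
      refine Finset.sum_congr rfl fun m _ => ?_
      rw [hf]; simp only [hw]
      rw [dif_pos (lt_trans m.isLt hkd)]
    have e2 : ∑ m : Fin k, f (m : ℕ) = ∑ m ∈ range k, f m := Fin.sum_univ_eq_sum_range _ k
    have e3 : ∑ m ∈ range k, f m = ∑ m ∈ range d, f m := by
      apply Finset.sum_subset
      · intro x hx; simp only [mem_range] at *; omega
      · intro x hx hx'
        simp only [mem_range, not_lt] at hx hx'
        rw [hf]
        simp only
        rw [dif_pos hx]
        rw [hvtail' ⟨x, hx⟩ hx', mul_zero]
    have e4 : ∑ m ∈ range d, f m = ∑ j : Fin d, f (j : ℕ) :=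
      (Fin.sum_univ_eq_sum_range _ d).symm
    have e5 : ∑ j : Fin d, f (j : ℕ) = ∑ j : Fin d, a (((⟨(i : ℕ), lt_trans i.isLt hkd⟩ : Fin d) : ℕ) + (j : ℕ)) * v j := by
      refine Finset.sum_congr rfl fun j _ => ?_
      rw [hf]; simp only
      rw [dif_pos j.isLt]
    rw [e1, e2, e3, e4, e5, hrow]
  have hwz : w = 0 := by
    by_contra hwne
    exact hdetk ((Matrix.exists_mulVec_eq_zero_iff).mp ⟨w, hwne, hwmv⟩)
  apply hv0
  funext j
  by_cases hjk : (j : ℕ) < k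
  · have := congrFun hwz ⟨(j : ℕ), hjk⟩
    simpa [hw] using this
  · exact hvtail' j (by omega)

def uvec (a : ℕ → F) (k : ℕ) : Fin k → F := fun i => a (k + (i : ℕ))

noncomputable def cvec (a : ℕ → F) (k : ℕ) : Fin k → F :=
  (hmat a k)⁻¹ *ᵥ uvec a k

lemma cvec_spec {a : ℕ → F} {k : ℕ} (hdetk : (hmat a k).det ≠ 0) :
    (hmat a k) *ᵥ cvec a k = uvec a k := by
  unfold cvec
  rw [Matrix.mulVec_mulVec, Matrix.mul_nonsing_inv _ (isUnit_iff_ne_zero.mpr hdetk),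
    Matrix.one_mulVec]

lemma cvec_unique {a : ℕ → F} {k : ℕ} (hdetk : (hmat a k).det ≠ 0) (c : Fin k → F)
    (hc : (hmat a k) *ᵥ c = uvec a k) : c = cvec a k := by
  unfold cvec
  rw [← hc, Matrix.mulVec_mulVec, Matrix.nonsing_inv_mul _ (isUnit_iff_ne_zero.mpr hdetk),
    Matrix.one_mulVec]

lemma mulVec_eq_iff_rec_base {a : ℕ → F} {k : ℕ} (c : Fin k → F) :
    (hmat a k) *ᵥ c = uvec a k
      ↔ (∀ t, k ≤ t → t < 2 * k → a t = ∑ m : Fin k, c m * a (t - k + m)) := by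
  constructor
  · intro h t ht1 ht2
    have hi : t - k < k := by omega
    have := congrFun h ⟨t - k, hi⟩
    simp only [Matrix.mulVec, dotProduct, hmat, uvec] at this
    have ht : k + (t - k) = t := by omega
    rw [ht] at this
    rw [← this]
    refine Finset.sum_congr rfl fun m _ => ?_
    simp only [Matrix.of_apply]
    rw [mul_comm]
  · intro h
    funext i
    simp only [Matrix.mulVec, dotProduct, hmat, uvec]
    have := h (k + (i : ℕ)) (by omega) (by omega)
    have h2 : ∀ m : Fin k, a (k + (i : ℕ) - k + (m : ℕ)) = a ((i : ℕ) + (m : ℕ)) := by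
      intro m; congr 1; omega
    rw [Finset.sum_congr rfl fun m _ => by rw [h2 m]] at this
    rw [this]
    exact Finset.sum_congr rfl fun m _ => by simp [mul_comm]

/-- The main characterization: given `A_k` nonsingular (`1 ≤ k < n`), all larger leading
principal minors up to size `n` vanish iff the canonical order-`k` recurrence continues
to hold on `[2k, n+k)`. -/
lemma cond_iff {a : ℕ → F} {k n : ℕ} (hk1 : 1 ≤ k) (hkn : k < n)
    (hdetk : (hmat a k).det ≠ 0) :
    (∀ d, d ≤ n → k < d → (hmat a d).det = 0)
      ↔ (∀ t, 2 * k ≤ t → t < n + k → a t = ∑ m : Fin k, cvec a k m * a (t - k + m)) := by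
  constructor
  · intro H t
    induction t using Nat.strong_induction_on with
    | _ t ih =>
      intro ht1 ht2
      refine rec_step ht1 (cvec a k) hdetk ?_ (H (t + 1 - k) (by omega) (by omega))
      intro s hs1 hs2
      by_cases hs3 : s < 2 * k
      · exact (mulVec_eq_iff_rec_base (cvec a k)).mp (cvec_spec hdetk) s hs1 hs3
      · exact ih s hs2 (by omega) (by omega)
  · intro H d hdn hkd
    refine det_zero_of_rec hkd (cvec a k) ?_
    intro t ht1 ht2
    by_cases hs3 : t < 2 * k
    · exact (mulVec_eq_iff_rec_base (cvec a k)).mp (cvec_spec hdetk) t ht1 hs3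
    · exact H t (by omega) (by omega)

/-- extension of a finite tuple by zero -/
def extz {m : ℕ} (v : Fin m → F) : ℕ → F := fun t => if h : t < m then v ⟨t, h⟩ else 0

lemma extz_init {m : ℕ} (z : Fin (m + 1) → F) {i : ℕ} (h : i < m) :
    extz (Fin.init z) i = extz z i := by
  unfold extz
  rw [dif_pos h, dif_pos (by omega : i < m + 1)]
  show z (Fin.castSucc _) = _
  congr 1

lemma extz_last {m : ℕ} (z : Fin (m + 1) → F) :
    extz z m = z (Fin.last m) := by
  unfold extz
  rw [dif_pos (by omega : m < m + 1)]
  rfl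

def esnoc {m : ℕ} : (Fin (m + 1) → F) ≃ (Fin m → F) × F where
  toFun z := (Fin.init z, z (Fin.last m))
  invFun p := Fin.snoc p.1 p.2
  left_inv z := Fin.snoc_init_self z
  right_inv p := by simp [Fin.init_snoc, Fin.snoc_last]

def eqvGraph {α β : Type*} (P : α → Prop) (g : α → β) :
    {p : α × β // P p.1 ∧ p.2 = g p.1} ≃ {a : α // P a} where
  toFun p := ⟨p.1.1, p.2.1⟩
  invFun a := ⟨(a.1, g a.1), a.2, rfl⟩
  left_inv p := Subtype.ext (by
    obtain ⟨⟨x, y⟩, hP, hy⟩ := p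
    exact congrArg (Prod.mk x) hy.symm)
  right_inv a := rfl

def eqvFree {α β : Type*} (P : α → Prop) :
    {p : α × β // P p.1} ≃ {a : α // P a} × β where
  toFun p := (⟨p.1.1, p.2⟩, p.1.2)
  invFun q := ⟨(q.1.1, q.2), q.1.2⟩
  left_inv p := rfl
  right_inv q := rfl

/-- Triangular counting lemma. -/
lemma gcl (b : ℕ) (J : ℕ → Prop) [DecidablePred J] (hJ : ∀ j, J j → b ≤ j)
    (f : ℕ → (ℕ → F) → F)
    (hf : ∀ j, J j → ∀ z z' : ℕ → F, (∀ i, i < j → z i = z' i) → f j z = f j z')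
    (Q : (ℕ → F) → Prop)
    (hQ : ∀ z z' : ℕ → F, (∀ i, i < b → z i = z' i) → (Q z → Q z')) :
    ∀ m, b ≤ m →
      Nat.card {z : Fin m → F // Q (extz z) ∧ ∀ j, J j → j < m → extz z j = f j (extz z)}
        = Nat.card {z : Fin b → F // Q (extz z)}
            * Nat.card F ^ (m - b - ((Finset.Ico b m).filter J).card) := by
  intro m hm
  induction m, hm using Nat.le_induction with
  | base =>
    have he : {z : Fin b → F // Q (extz z) ∧ ∀ j, J j → j < b → extz z j = f j (extz z)}
        ≃ {z : Fin b → F // Q (extz z)} :=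
      Equiv.subtypeEquivRight fun z => by
        constructor
        · exact fun h => h.1
        · exact fun h => ⟨h, fun j hj hjb => absurd (hJ j hj) (by omega)⟩
    rw [Nat.card_congr he]
    simp
  | succ m hbm ih =>
    set P0 : (Fin m → F) → Prop :=
      fun z => Q (extz z) ∧ ∀ j, J j → j < m → extz z j = f j (extz z) with hP0
    have transfer : ∀ z : Fin (m + 1) → F,
        (Q (extz z) ∧ ∀ j, J j → j < m + 1 → extz z j = f j (extz z))
        ↔ (P0 (Fin.init z) ∧ (J m → z (Fin.last m) = f m (extz (Fin.init z)))) := by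
      intro z
      have hagree : ∀ i, i < m → extz (Fin.init z) i = extz z i := fun i h => extz_init z h
      constructor
      · rintro ⟨hQz, hconds⟩
        refine ⟨⟨hQ _ _ (fun i hi => (hagree i (by omega)).symm) hQz, ?_⟩, ?_⟩
        · intro j hj hjm
          rw [hagree j hjm, hf j hj _ _ (fun i hi => hagree i (by omega))]
          exact hconds j hj (by omega)
        · intro hJm
          rw [hf m hJm _ _ (fun i hi => hagree i hi), ← extz_last z]
          exact hconds m hJm (by omega)
      · rintro ⟨⟨hQz, hconds⟩, hlast⟩
        refine ⟨hQ _ _ (fun i hi => hagree i (by omega)) hQz, ?_⟩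
        intro j hj hjm
        by_cases hjm' : j < m
        · rw [← hagree j hjm', ← hf j hj _ _ (fun i hi => hagree i (by omega))]
          exact hconds j hj hjm'
        · have hjm2 : j = m := by omega
          subst hjm2
          rw [hf j hj (extz z) (extz (Fin.init z)) (fun i hi => (hagree i hi).symm),
            extz_last z]
          exact hlast hj
    have e1 : {z : Fin (m + 1) → F // Q (extz z) ∧ ∀ j, J j → j < m + 1 → extz z j = f j (extz z)}
        ≃ {p : (Fin m → F) × F // P0 p.1 ∧ (J m → p.2 = f m (extz p.1))} :=
      Equiv.subtypeEquiv esnoc fun z => by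
        rw [transfer z]
        rfl
    have hfc : ((Finset.Ico b m).filter J).card ≤ m - b := by
      have := Finset.card_filter_le (Finset.Ico b m) J
      rwa [Nat.card_Ico] at this
    have hIco : Finset.Ico b (m + 1) = insert m (Finset.Ico b m) :=
      Nat.Ico_succ_right_eq_insert_Ico hbm
    by_cases hJm : J m
    · have e2 : {p : (Fin m → F) × F // P0 p.1 ∧ (J m → p.2 = f m (extz p.1))}
          ≃ {p : (Fin m → F) × F // P0 p.1 ∧ p.2 = f m (extz p.1)} :=
        Equiv.subtypeEquivRight fun p => by
          constructor
          · exact fun h => ⟨h.1, h.2 hJm⟩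
          · exact fun h => ⟨h.1, fun _ => h.2⟩
      have hcard : ((Finset.Ico b (m + 1)).filter J).card
          = ((Finset.Ico b m).filter J).card + 1 := by
        rw [hIco, Finset.filter_insert, if_pos hJm,
          Finset.card_insert_of_notMem (by simp)]
      rw [Nat.card_congr (e1.trans (e2.trans (eqvGraph P0 (fun z => f m (extz z))))), ih,
        hcard]
      congr 2
      omega
    · have e2 : {p : (Fin m → F) × F // P0 p.1 ∧ (J m → p.2 = f m (extz p.1))}
          ≃ {p : (Fin m → F) × F // P0 p.1} :=
        Equiv.subtypeEquivRight fun p => by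
          constructor
          · exact fun h => h.1
          · exact fun h => ⟨h, fun hJ' => absurd hJ' hJm⟩
      have hcard : ((Finset.Ico b (m + 1)).filter J).card
          = ((Finset.Ico b m).filter J).card := by
        rw [hIco, Finset.filter_insert, if_neg hJm]
      rw [Nat.card_congr (e1.trans (e2.trans (eqvFree P0))), Nat.card_prod, ih, hcard]
      rw [mul_assoc, ← pow_succ]
      congr 2
      omega

-- ### counting application 1 : "all first n entries vanish"
lemma count0 (m n : ℕ) (hnm : n ≤ m) :
    Nat.card {z : Fin m → F // ∀ t, t < n → extz z t = 0} = Nat.card F ^ (m - n) := by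
  classical
  have h := gcl (F := F) 0 (fun j => j < n) (fun j _ => by omega) (fun _ _ => 0)
    (fun j _ z z' _ => rfl) (fun _ => True) (fun _ _ _ => id) m (by omega)
  have he : {z : Fin m → F // (fun _ => True) (extz z) ∧
        ∀ j, (fun j => j < n) j → j < m → extz z j = (fun (_ : ℕ) (_ : ℕ → F) => (0 : F)) j (extz z)}
      ≃ {z : Fin m → F // ∀ t, t < n → extz z t = 0} :=
    Equiv.subtypeEquivRight fun z => by
      constructor
      · exact fun hz t ht => hz.2 t ht (by omega)
      · exact fun hz => ⟨trivial, fun j hj _ => hz j hj⟩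
  rw [Nat.card_congr he.symm, h]
  have h1 : Nat.card {z : Fin 0 → F // (fun _ => True) (extz z)} = 1 := by
    have : Unique {z : Fin 0 → F // (fun _ => True) (extz z)} :=
      ⟨⟨⟨fun i => i.elim0, trivial⟩⟩, fun z => Subtype.ext (funext fun i => i.elim0)⟩
    exact Nat.card_eq_one_iff_unique.mpr ⟨⟨fun a b => Subsingleton.elim a b⟩, ⟨this.default⟩⟩
  rw [h1, one_mul]
  congr 1
  have : (Finset.Ico 0 m).filter (fun j => j < n) = Finset.Ico 0 n := by
    ext x
    simp only [Finset.mem_filter, Finset.mem_Ico]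
    omega
  rw [this, Nat.card_Ico]
  omega

-- ### counting application 2 : prefix with nonsingular `A_k`, all later minors singular
lemma countk (k n : ℕ) (hk1 : 1 ≤ k) (hkn : k < n) :
    Nat.card {z : Fin (2 * n - 1) → F //
        (hmat (extz z) k).det ≠ 0 ∧ ∀ d, d ≤ n → k < d → (hmat (extz z) d).det = 0}
      = Nat.card {u : Fin (2 * k - 1) → F // (hmat (extz u) k).det ≠ 0}
          * Nat.card F ^ (n - k) := by
  classical
  set J : ℕ → Prop := fun j => 2 * k ≤ j ∧ j < n + k with hJdef
  set f : ℕ → (ℕ → F) → F :=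
    fun j z => ∑ m : Fin k, cvec z k m * z (j - k + (m : ℕ)) with hfdef
  set Q : (ℕ → F) → Prop := fun z => (hmat z k).det ≠ 0 with hQdef
  have hf : ∀ j, J j → ∀ z z' : ℕ → F, (∀ i, i < j → z i = z' i) → f j z = f j z' := by
    intro j hj z z' hzz
    have hmateq : hmat z k = hmat z' k := hmat_congr fun t ht => hzz t (by omega)
    have huveq : uvec z k = uvec z' k := funext fun i => hzz _ (by
      have := i.isLt
      simp only [hJdef] at hj
      omega)
    simp only [hfdef, cvec, hmateq, huveq]
    refine Finset.sum_congr rfl fun m _ => ?_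
    have := m.isLt
    rw [hzz (j - k + (m : ℕ)) (by simp only [hJdef] at hj; omega)]
  have hQ : ∀ z z' : ℕ → F, (∀ i, i < 2 * k - 1 → z i = z' i) → (Q z → Q z') := by
    intro z z' hzz hz
    simpa only [hQdef, hmat_congr (fun t ht => (hzz t ht).symm) ] using hz
  have h := gcl (F := F) (2 * k - 1) J (fun j hj => by simp only [hJdef] at hj; omega)
    f hf Q hQ (2 * n - 1) (by omega)
  have he : {z : Fin (2 * n - 1) → F // Q (extz z) ∧
        ∀ j, J j → j < 2 * n - 1 → extz z j = f j (extz z)}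
      ≃ {z : Fin (2 * n - 1) → F //
          (hmat (extz z) k).det ≠ 0 ∧ ∀ d, d ≤ n → k < d → (hmat (extz z) d).det = 0} :=
    Equiv.subtypeEquivRight fun z => by
      constructor
      · rintro ⟨hdet, hrec⟩
        refine ⟨hdet, (cond_iff hk1 hkn hdet).mpr ?_⟩
        intro t ht1 ht2
        exact hrec t ⟨ht1, ht2⟩ (by omega)
      · rintro ⟨hdet, hvan⟩
        refine ⟨hdet, fun j hj _ => ?_⟩
        exact (cond_iff hk1 hkn hdet).mp hvan j hj.1 hj.2
  rw [Nat.card_congr he.symm, h]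
  have hfil : (Finset.Ico (2 * k - 1) (2 * n - 1)).filter J = Finset.Ico (2 * k) (n + k) := by
    ext x
    simp only [Finset.mem_filter, Finset.mem_Ico, hJdef]
    omega
  have hQe : {z : Fin (2 * k - 1) → F // Q (extz z)}
      = {u : Fin (2 * k - 1) → F // (hmat (extz u) k).det ≠ 0} := rfl
  rw [hQe, hfil, Nat.card_Ico]
  have hexp : 2 * n - 1 - (2 * k - 1) - (n + k - 2 * k) = n - k := by omega
  rw [hexp]


section FintypeF
variable [Fintype F]

lemma nat_card_sigma {ι : Type*} [Fintype ι] (f : ι → Type*) [∀ i, Finite (f i)] :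
    Nat.card (Σ i, f i) = ∑ i, Nat.card (f i) := by
  letI : ∀ i, Fintype (f i) := fun i => Fintype.ofFinite _
  simp [Nat.card_eq_fintype_card, Fintype.card_sigma]

lemma geom_aux (r : ℕ) : ∀ p : ℕ,
    (∑ i ∈ Finset.range p, (r + 1) ^ (p + i) * r) + (r + 1) ^ p = (r + 1) ^ (2 * p) := by
  intro p
  induction p with
  | zero => simp
  | succ p ih =>
    have hshift : ∀ i : ℕ, (r + 1) ^ (p + 1 + i) * r = (r + 1) * ((r + 1) ^ (p + i) * r) := by
      intro i
      rw [show p + 1 + i = (p + i) + 1 by omega, pow_succ]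
      ring
    rw [Finset.sum_range_succ, Finset.sum_congr rfl fun i _ => hshift i, ← Finset.mul_sum]
    have e1 : (r + 1) ^ (p + 1 + p) = (r + 1) ^ (2 * p) * (r + 1) := by
      rw [show p + 1 + p = 2 * p + 1 from by omega, pow_succ]
    have e2 : (r + 1) ^ (2 * (p + 1)) = (r + 1) ^ (2 * p) * (r + 1) * (r + 1) := by
      rw [show 2 * (p + 1) = 2 * p + 1 + 1 from by omega, pow_succ, pow_succ]
    have e3 : (r + 1) ^ (p + 1) = (r + 1) ^ p * (r + 1) := pow_succ _ _
    rw [e1, e2, e3, ← ih]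
    ring

-- the count of nonsingular k×k Hankel matrices
lemma Nmain : ∀ κ, 1 ≤ κ →
    Nat.card {u : Fin (2 * κ - 1) → F // (hmat (extz u) κ).det ≠ 0}
      = Fintype.card F ^ (2 * κ - 2) * (Fintype.card F - 1) := by
  intro κ
  induction κ using Nat.strong_induction_on with
  | _ κ ih =>
    intro hκ1
    classical
    set q := Fintype.card F with hq
    have hq1 : 1 ≤ q := Fintype.card_pos
    set P : ℕ → (Fin (2 * κ - 1) → F) → Prop :=
      fun d v => (hmat (extz v) d).det ≠ 0 with hP
    have hdecP : ∀ v, DecidablePred (fun d => P d v) := fun v d => Classical.dec _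
    set Mx : (Fin (2 * κ - 1) → F) → Fin (κ + 1) :=
      fun v => ⟨@Nat.findGreatest (fun d => P d v) (hdecP v) κ,
        by have := @Nat.findGreatest_le (fun d => P d v) (hdecP v) κ; omega⟩ with hMx
    -- total count
    have htot : Nat.card (Fin (2 * κ - 1) → F) = q ^ (2 * κ - 1) := by
      rw [Nat.card_fun]
      simp [hq, Nat.card_eq_fintype_card]
    -- partition
    have hpart : Nat.card (Fin (2 * κ - 1) → F)
        = ∑ j : Fin (κ + 1), Nat.card {v : Fin (2 * κ - 1) → F // Mx v = j} := by
      rw [← nat_card_sigma (fun j : Fin (κ + 1) => {v : Fin (2 * κ - 1) → F // Mx v = j})]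
      exact (Nat.card_congr (Equiv.sigmaFiberEquiv Mx)).symm
    -- identify fibers
    set g : ℕ → ℕ := fun j => Nat.card {v : Fin (2 * κ - 1) → F //
      (@Nat.findGreatest (fun d => P d v) (hdecP v) κ) = j} with hg
    have hfib : ∀ j : Fin (κ + 1),
        Nat.card {v : Fin (2 * κ - 1) → F // Mx v = j} = g (j : ℕ) := by
      intro j
      rw [hg]
      exact Nat.card_congr (Equiv.subtypeEquivRight fun v => by
        rw [hMx]
        constructor
        · intro h; exact congrArg Fin.val h
        · intro h; exact Fin.ext h)
    -- g 0
    have hg0 : g 0 = q ^ (κ - 1) := by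
      simp only [hg]
      have he : {v : Fin (2 * κ - 1) → F //
            (@Nat.findGreatest (fun d => P d v) (hdecP v) κ) = 0}
          ≃ {v : Fin (2 * κ - 1) → F // ∀ t, t < κ → extz v t = 0} :=
        Equiv.subtypeEquivRight fun v => by
          rw [Nat.findGreatest_eq_zero_iff]
          constructor
          · intro h
            refine hmat_all_det_zero_iff.mp (fun d hd1 hd2 => ?_)
            by_contra hne
            exact h (by omega) hd2 hne
          · intro h d hd1 hd2 hP'
            exact hP' (hmat_all_det_zero_iff.mpr h d (by omega) hd2)
      rw [Nat.card_congr he, count0 (2 * κ - 1) κ (by omega), Nat.card_eq_fintype_card]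
      congr 1
      omega
    -- g j for 1 ≤ j ≤ κ
    have hgj : ∀ j, 1 ≤ j → j ≤ κ → g j = Nat.card {v : Fin (2 * κ - 1) → F //
        (hmat (extz v) j).det ≠ 0 ∧ ∀ d, d ≤ κ → j < d → (hmat (extz v) d).det = 0} := by
      intro j hj1 hj2
      rw [hg]
      refine Nat.card_congr (Equiv.subtypeEquivRight fun v => ?_)
      rw [Nat.findGreatest_eq_iff]
      constructor
      · rintro ⟨-, h2, h3⟩
        refine ⟨h2 (by omega), fun d hd1 hd2 => ?_⟩
        by_contra hne
        exact h3 hd2 hd1 hne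
      · rintro ⟨h1, h2⟩
        exact ⟨hj2, fun _ => h1, fun d hd1 hd2 hne => hne (h2 d hd2 hd1)⟩
    -- middle fibers
    have hmid : ∀ j, 1 ≤ j → j < κ → g j = q ^ (κ + j - 2) * (q - 1) := by
      intro j hj1 hj2
      rw [hgj j hj1 (by omega), countk j κ hj1 hj2, ih j (by omega) hj1]
      rw [mul_assoc, mul_comm (q - 1) (Nat.card F ^ (κ - j)), ← mul_assoc]
      have : Nat.card F = q := by rw [Nat.card_eq_fintype_card]
      rw [this, ← pow_add]
      congr 2
      omega
    -- top fiber
    have htop : g κ = Nat.card {u : Fin (2 * κ - 1) → F // (hmat (extz u) κ).det ≠ 0} := by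
      rw [hgj κ hκ1 le_rfl]
      refine Nat.card_congr (Equiv.subtypeEquivRight fun v => ?_)
      constructor
      · exact fun h => h.1
      · exact fun h => ⟨h, fun d hd1 hd2 => by omega⟩
    -- assemble
    set X := Nat.card {u : Fin (2 * κ - 1) → F // (hmat (extz u) κ).det ≠ 0} with hX
    have hsum : q ^ (2 * κ - 1)
        = (∑ j ∈ Finset.range κ, g j) + X := by
      rw [← htot, hpart, Finset.sum_congr rfl fun j _ => hfib j]
      rw [Fin.sum_univ_eq_sum_range (fun j => g j) (κ + 1), Finset.sum_range_succ, htop]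
    have hsum2 : (∑ j ∈ Finset.range κ, g j) = q ^ (2 * κ - 2) := by
      obtain ⟨p, rfl⟩ : ∃ p, κ = p + 1 := ⟨κ - 1, by omega⟩
      rw [Finset.sum_range_succ']
      have hmid' : ∀ i ∈ Finset.range p, g (i + 1) = q ^ (p + i) * (q - 1) := by
        intro i hi
        simp only [Finset.mem_range] at hi
        rw [hmid (i + 1) (by omega) (by omega)]
        congr 2
        omega
      rw [Finset.sum_congr rfl hmid', hg0]
      obtain ⟨r, hr⟩ : ∃ r, q = r + 1 := ⟨q - 1, by omega⟩
      rw [hr, Nat.add_sub_cancel,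
        show p + 1 - 1 = p from by omega,
        show 2 * (p + 1) - 2 = 2 * p from by omega]
      exact geom_aux r p
    have hfinal : q ^ (2 * κ - 2) * (q - 1) + q ^ (2 * κ - 2) = q ^ (2 * κ - 1) := by
      obtain ⟨r, hr⟩ : ∃ r, q = r + 1 := ⟨q - 1, by omega⟩
      rw [hr, Nat.add_sub_cancel, show 2 * κ - 1 = (2 * κ - 2) + 1 from by omega, pow_succ]
      ring
    rw [hsum2] at hsum
    omega


-- ### bridge between Hankel matrices and sequences
def toM {n : ℕ} (v : Fin (2 * n - 1) → F) : Matrix (Fin n) (Fin n) F :=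
  Matrix.of fun i j => extz v ((i : ℕ) + (j : ℕ))

lemma isHankel_toM {n : ℕ} (v : Fin (2 * n - 1) → F) : IsHankel (toM v) := by
  intro i j r s h
  simp only [toM, Matrix.of_apply]
  rw [h]

def vOf {n : ℕ} (M : Matrix (Fin n) (Fin n) F) : Fin (2 * n - 1) → F :=
  fun t => M ⟨min (t : ℕ) (n - 1), by have := t.isLt; omega⟩
    ⟨(t : ℕ) - min (t : ℕ) (n - 1), by have := t.isLt; omega⟩

lemma toM_vOf {n : ℕ} {M : Matrix (Fin n) (Fin n) F} (hM : IsHankel M) :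
    toM (vOf M) = M := by
  ext i j
  have hi := i.isLt
  have hj := j.isLt
  simp only [toM, Matrix.of_apply, extz, vOf]
  rw [dif_pos (by omega : (i : ℕ) + (j : ℕ) < 2 * n - 1)]
  exact hM _ _ i j (by simp only; omega)

lemma vOf_toM {n : ℕ} (v : Fin (2 * n - 1) → F) : vOf (toM v) = v := by
  funext t
  have ht := t.isLt
  have key : ∀ (i j : Fin n), ((i : ℕ) + (j : ℕ)) = (t : ℕ) → toM v i j = v t := by
    intro i j hij
    show extz v ((i : ℕ) + (j : ℕ)) = v t
    unfold extz
    rw [dif_pos (by omega : (i : ℕ) + (j : ℕ) < 2 * n - 1)]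
    exact congrArg v (Fin.ext hij)
  exact key ⟨min (t : ℕ) (n - 1), by omega⟩ ⟨(t : ℕ) - min (t : ℕ) (n - 1), by omega⟩
    (by simp only; omega)

def bridge {n : ℕ} (R : Matrix (Fin n) (Fin n) F → Prop) :
    {M : Matrix (Fin n) (Fin n) F // IsHankel M ∧ R M}
      ≃ {v : Fin (2 * n - 1) → F // R (toM v)} where
  toFun M := ⟨vOf M.1, by rw [toM_vOf M.2.1]; exact M.2.2⟩
  invFun v := ⟨toM v.1, isHankel_toM _, v.2⟩
  left_inv M := Subtype.ext (toM_vOf M.2.1)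
  right_inv v := Subtype.ext (vOf_toM v.1)

lemma toM_submatrix {n d : ℕ} (v : Fin (2 * n - 1) → F) (hd : d ≤ n) :
    (toM v).submatrix (Fin.castLE hd) (Fin.castLE hd) = hmat (extz v) d := by
  ext i j
  simp [toM, hmat]


end FintypeF
end HankelAux

/-- For `1 ≤ k ≤ n`, the number of `n × n` Hankel matrices over `F_q` whose `k`-th leading
principal submatrix is nonsingular while all larger leading principal submatrices are
singular equals `q^(n+k-2)(q-1)`; the number of those with all leading principal
submatrices singular equals `q^(n-1)`. -/

theorem hankel_delta_card (F : Type*) [Field F] [Fintype F] (n k : ℕ) (hn : 1 ≤ n)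
    (hk1 : 1 ≤ k) (hk : k ≤ n) :
    Nat.card {M : Matrix (Fin n) (Fin n) F // IsHankel M ∧
        (M.submatrix (Fin.castLE hk) (Fin.castLE hk)).det ≠ 0 ∧
        ∀ (d : ℕ) (hd : d ≤ n), k < d →
          (M.submatrix (Fin.castLE hd) (Fin.castLE hd)).det = 0}
      = Fintype.card F ^ (n + k - 2) * (Fintype.card F - 1) ∧
    Nat.card {M : Matrix (Fin n) (Fin n) F // IsHankel M ∧
        ∀ (d : ℕ) (hd : d ≤ n), 1 ≤ d →
          (M.submatrix (Fin.castLE hd) (Fin.castLE hd)).det = 0}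
      = Fintype.card F ^ (n - 1) := by
  have hq : Nat.card F = Fintype.card F := Nat.card_eq_fintype_card
  constructor
  · -- first count
    rw [Nat.card_congr (bridge _)]
    have he : {v : Fin (2 * n - 1) → F //
          ((toM v).submatrix (Fin.castLE hk) (Fin.castLE hk)).det ≠ 0 ∧
          ∀ (d : ℕ) (hd : d ≤ n), k < d →
            ((toM v).submatrix (Fin.castLE hd) (Fin.castLE hd)).det = 0}
        ≃ {v : Fin (2 * n - 1) → F //
            (hmat (extz v) k).det ≠ 0 ∧ ∀ d, d ≤ n → k < d → (hmat (extz v) d).det = 0} :=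
      Equiv.subtypeEquivRight fun v => by
        rw [toM_submatrix v hk]
        constructor
        · rintro ⟨h1, h2⟩
          exact ⟨h1, fun d hd hkd => by rw [← toM_submatrix v hd]; exact h2 d hd hkd⟩
        · rintro ⟨h1, h2⟩
          exact ⟨h1, fun d hd hkd => by rw [toM_submatrix v hd]; exact h2 d hd hkd⟩
    rw [Nat.card_congr he]
    rcases Nat.lt_or_ge k n with hkn | hkn
    · rw [countk k n hk1 hkn, Nmain k hk1, hq]
      rw [mul_assoc, mul_comm (Fintype.card F - 1) (Fintype.card F ^ (n - k)), ← mul_assoc,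
        ← pow_add]
      congr 2
      omega
    · have hkn' : k = n := by omega
      subst hkn'
      have he2 : {v : Fin (2 * k - 1) → F //
            (hmat (extz v) k).det ≠ 0 ∧ ∀ d, d ≤ k → k < d → (hmat (extz v) d).det = 0}
          ≃ {v : Fin (2 * k - 1) → F // (hmat (extz v) k).det ≠ 0} :=
        Equiv.subtypeEquivRight fun v => by
          constructor
          · exact fun h => h.1
          · exact fun h => ⟨h, fun d hd1 hd2 => by omega⟩
      rw [Nat.card_congr he2, Nmain k hk1]
      congr 2
      omega
  · -- second count
    rw [Nat.card_congr (bridge _)]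
    have he : {v : Fin (2 * n - 1) → F //
          ∀ (d : ℕ) (hd : d ≤ n), 1 ≤ d →
            ((toM v).submatrix (Fin.castLE hd) (Fin.castLE hd)).det = 0}
        ≃ {v : Fin (2 * n - 1) → F // ∀ t, t < n → extz v t = 0} :=
      Equiv.subtypeEquivRight fun v => by
        constructor
        · intro h
          exact hmat_all_det_zero_iff.mp
            (fun d hd1 hd2 => by rw [← toM_submatrix v hd2]; exact h d hd2 hd1)
        · intro h d hd hd1
          rw [toM_submatrix v hd]
          exact hmat_all_det_zero_iff.mpr h d hd1 hd
    rw [Nat.card_congr he, count0 (2 * n - 1) n (by omega), hq]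
    congr 1
    omega
end
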